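/- arXiv:1003.6046 — 6 statements merged into one kernel-verified Lean document; each statement's English description precedes it below -/
import Mathlib

section
/- Let A be an expanding integer n×n matrix and let K ⊂ ℤⁿ contain a complete set of coset representatives of ℤⁿ/A(ℤⁿ). Then the map Φ : K^{-ω} × ℤⁿ → ℝⁿ defined by Φ(…x₂x₁, v) = v + A^{-1}x₁ + A^{-2}x₂ + … is surjective. -/
/-!
Write `M = A⁻¹` and let `F = D + ℤⁿ` be the image of `Φ`, where `D` is the set of digit sums
`∑ Mᵏ⁺¹ xₖ` with `xₖ ∈ K`. Since `A` is expanding, `M` has spectral radius `< 1`, so by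
Gelfand's formula `∑ ‖Mᵐ‖ < ∞`. Then `D` is a continuous image of the compact space `K^ℕ`, and
`F` is closed. Because `K` meets every coset of `A ℤⁿ`, `M F ⊆ F`. Given `p`, some point of `F`
is within sup-distance `1/2` of `Aᵐ p` (shift any point of `F` by an integer vector); applying
`Mᵐ` gives a point of `F` within `‖Mᵐ‖ / 2` of `p`. So `F` is dense and closed, hence all of
`ℝⁿ`.
-/

def IsExpanding {n : ℕ} (A : Matrix (Fin n) (Fin n) ℤ) : Prop :=
  ∀ μ : ℂ, (A.map (Int.cast : ℤ → ℂ)).charpoly.IsRoot μ → 1 < ‖μ‖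

open Filter Topology Matrix Pointwise

attribute [local instance] Matrix.linftyOpNormedAddCommGroup Matrix.linftyOpNormedRing
  Matrix.linftyOpNormedAlgebra

section SpectralRadius

variable {𝔸 : Type*} [NormedRing 𝔸] [NormedAlgebra ℂ 𝔸] [CompleteSpace 𝔸]

theorem summable_norm_pow_of_spectralRadius_lt_one {a : 𝔸} (ha : spectralRadius ℂ a < 1) :
    Summable fun m : ℕ => ‖a ^ m‖ := by
  obtain ⟨c, hac, hc1⟩ := exists_between ha
  have hc : c ≠ ⊤ := hc1.ne_top
  have hc1' : c.toReal < 1 := ENNReal.toReal_lt_of_lt_ofReal (by simpa using hc1)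
  refine Summable.of_norm_bounded_eventually_nat
    (summable_geometric_of_lt_one ENNReal.toReal_nonneg hc1') ?_
  filter_upwards [(spectrum.pow_norm_pow_one_div_tendsto_nhds_spectralRadius a).eventually_lt_const
    hac, eventually_gt_atTop 0] with m hm hm0
  rw [ENNReal.ofReal_lt_iff_lt_toReal (by positivity) hc, one_div,
    Real.rpow_inv_lt_iff_of_pos (norm_nonneg _) ENNReal.toReal_nonneg (Nat.cast_pos.mpr hm0),
    Real.rpow_natCast] at hm
  rw [norm_norm]
  exact hm.le

theorem spectralRadius_inv_lt_one_of_one_lt_norm (a : 𝔸ˣ)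
    (ha : ∀ μ ∈ spectrum ℂ (a : 𝔸), 1 < ‖μ‖) : spectralRadius ℂ (↑a⁻¹ : 𝔸) < 1 := by
  rcases (spectrum ℂ (↑a⁻¹ : 𝔸)).eq_empty_or_nonempty with h | h
  · simp [spectralRadius, h]
  refine spectrum.spectralRadius_lt_of_forall_lt_of_nonempty h fun μ hμ => ?_
  rw [← spectrum.map_inv, Set.mem_inv] at hμ
  have h1 : 1 < ‖μ‖⁻¹ := norm_inv μ ▸ ha _ hμ
  exact_mod_cast (one_lt_inv_iff₀.mp h1).2

end SpectralRadius

theorem Matrix.map_nonsing_inv {n R S : Type*} [Fintype n] [DecidableEq n] [CommRing R]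
    [CommRing S] (f : R →+* S) {M : Matrix n n R} (h : IsUnit M.det) :
    M⁻¹.map f = (M.map f)⁻¹ := by
  refine (inv_eq_left_inv ?_).symm
  rw [← Matrix.map_mul, nonsing_inv_mul _ h, Matrix.map_one _ f.map_zero f.map_one]

theorem Matrix.linfty_opNorm_map_of_norm_eq {m n α β : Type*} [Fintype m] [Fintype n]
    [NormedAddCommGroup α] [NormedAddCommGroup β] {f : α → β} (hf : ∀ x, ‖f x‖ = ‖x‖)
    (M : Matrix m n α) : ‖M.map f‖ = ‖M‖ := by
  have hnn (x : α) : ‖f x‖₊ = ‖x‖₊ := NNReal.eq (hf x)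
  simp [linfty_opNorm_def, hnn]

namespace IsExpanding

variable {n : ℕ} {A : Matrix (Fin n) (Fin n) ℤ}

theorem isUnit_map_complex (hA : IsExpanding A) : IsUnit (A.map (Int.cast : ℤ → ℂ)) := by
  by_contra h
  have h0 := (spectrum.zero_mem_iff ℂ).mpr h
  rw [Matrix.mem_spectrum_iff_isRoot_charpoly] at h0
  exact (hA 0 h0).not_ge (by simp)

theorem isUnit_det_map_real (hA : IsExpanding A) : IsUnit (A.map (Int.cast : ℤ → ℝ)).det := by
  have := (Matrix.isUnit_iff_isUnit_det _).mp hA.isUnit_map_complex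
  rw [← Int.cast_det] at this ⊢
  simpa using this

theorem summable_norm_inv_pow (hA : IsExpanding A) :
    Summable fun m => ‖(A.map (Int.cast : ℤ → ℝ))⁻¹ ^ m‖ := by
  set u := hA.isUnit_map_complex.unit
  have hu : spectralRadius ℂ (↑u⁻¹ : Matrix (Fin n) (Fin n) ℂ) < 1 :=
    spectralRadius_inv_lt_one_of_one_lt_norm u fun μ hμ =>
      hA μ (mem_spectrum_iff_isRoot_charpoly.mp hμ)
  have hinv : (A.map (Int.cast : ℤ → ℝ))⁻¹.map Complex.ofRealHom = ↑u⁻¹ := by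
    rw [map_nonsing_inv _ hA.isUnit_det_map_real, coe_units_inv, Matrix.map_map]
    rfl
  refine (summable_norm_pow_of_spectralRadius_lt_one hu).congr fun m => ?_
  rw [← hinv, ← RingHom.mapMatrix_apply, ← map_pow, RingHom.mapMatrix_apply]
  exact linfty_opNorm_map_of_norm_eq Complex.norm_real _

end IsExpanding

section IntegerPoints

variable (ι : Type*)

def integerPoints : Set (ι → ℝ) :=
  Set.range fun v : ι → ℤ => Int.cast ∘ v

theorem isClosed_integerPoints : IsClosed (integerPoints ι) := by
  have hrange : (fun v : ι → ℤ => (Int.cast ∘ v : ι → ℝ)) = Pi.map fun _ => Int.cast := rfl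
  rw [integerPoints, hrange, Set.range_piMap]
  exact isClosed_set_pi fun _ _ => Int.isClosedEmbedding_coe_real.isClosed_range

variable {ι}

theorem add_intCast_mem_add_integerPoints {S : Set (ι → ℝ)} {q : ι → ℝ}
    (hq : q ∈ S + integerPoints ι) (v : ι → ℤ) : q + Int.cast ∘ v ∈ S + integerPoints ι := by
  obtain ⟨s, hs, _, ⟨u, rfl⟩, rfl⟩ := hq
  refine ⟨s, hs, _, ⟨u + v, rfl⟩, ?_⟩
  rw [add_assoc]
  congr 1
  funext i
  simp

theorem exists_norm_sub_intCast_le_half [Fintype ι] (y : ι → ℝ) :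
    ∃ v : ι → ℤ, ‖y - Int.cast ∘ v‖ ≤ 1 / 2 := by
  refine ⟨round ∘ y, (pi_norm_le_iff_of_nonneg (by norm_num)).mpr fun i => ?_⟩
  simpa [Real.norm_eq_abs] using abs_sub_round (y i)

end IntegerPoints

section DigitSums

variable {ι : Type*} [Fintype ι] [DecidableEq ι]

theorem Set.MapsTo.mulVec_pow {M : Matrix ι ι ℝ} {F : Set (ι → ℝ)}
    (hM : Set.MapsTo (M *ᵥ ·) F F) (m : ℕ) : Set.MapsTo ((M ^ m) *ᵥ ·) F F := by
  induction m with
  | zero => intro q hq; simpa using hq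
  | succ m ih => intro q hq; simpa [pow_succ', mulVec_mulVec] using hM (ih hq)

theorem eq_univ_of_mapsTo_mulVec {M B : Matrix ι ι ℝ} {F : Set (ι → ℝ)} (hF : IsClosed F)
    (hne : F.Nonempty) (hadd : ∀ q ∈ F, ∀ v : ι → ℤ, q + Int.cast ∘ v ∈ F)
    (hM : Set.MapsTo (M *ᵥ ·) F F) (hMB : M * B = 1)
    (hlim : Tendsto (fun m => ‖M ^ m‖) atTop (𝓝 0)) : F = Set.univ := by
  refine Set.eq_univ_of_forall fun p =>
    hF.closure_subset (Metric.mem_closure_iff.mpr fun ε hε => ?_)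
  obtain ⟨m, hm⟩ := (hlim.eventually_lt_const hε).exists
  obtain ⟨q, hq⟩ := hne
  obtain ⟨v, hv⟩ := exists_norm_sub_intCast_le_half ((B ^ m) *ᵥ p - q)
  refine ⟨(M ^ m) *ᵥ (q + Int.cast ∘ v), hM.mulVec_pow m (hadd q hq v), ?_⟩
  have hcomm : Commute M B := hMB.trans (mul_eq_one_comm.mp hMB).symm
  have hp : (M ^ m) *ᵥ ((B ^ m) *ᵥ p) = p := by
    rw [mulVec_mulVec, ← hcomm.mul_pow, hMB, one_pow, one_mulVec]
  calc dist p ((M ^ m) *ᵥ (q + Int.cast ∘ v))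
      = ‖(M ^ m) *ᵥ ((B ^ m) *ᵥ p - q - Int.cast ∘ v)‖ := by
        rw [dist_eq_norm, mulVec_sub, mulVec_sub, hp, mulVec_add, sub_sub]
    _ ≤ ‖M ^ m‖ * (1 / 2) := (linfty_opNorm_mulVec _ _).trans (by gcongr)
    _ < ε := by linarith [norm_nonneg (M ^ m)]

def digitSums (M : Matrix ι ι ℝ) (K : Finset (ι → ℤ)) : Set (ι → ℝ) :=
  {s | ∃ x : ℕ → ι → ℤ, (∀ k, x k ∈ K) ∧ HasSum (fun k => (M ^ (k + 1)) *ᵥ (Int.cast ∘ x k)) s}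

variable {M : Matrix ι ι ℝ} {K : Finset (ι → ℤ)}

theorem mulVec_add_mem_digitSums {s : ι → ℝ} (hs : s ∈ digitSums M K) {d : ι → ℤ}
    (hd : d ∈ K) : M *ᵥ ((Int.cast ∘ d : ι → ℝ) + s) ∈ digitSums M K := by
  obtain ⟨x, hx, hsum⟩ := hs
  let y : ℕ → ι → ℤ := fun k => Nat.casesOn k d x
  refine ⟨y, fun k => ?_, ?_⟩
  · cases k
    · exact hd
    · exact hx _
  have hMs : HasSum (fun k => (M ^ (k + 1 + 1)) *ᵥ (Int.cast ∘ y (k + 1))) (M *ᵥ s) := by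
    have := hsum.map (mulVecLin M) (mulVecLin M).continuous_of_finiteDimensional
    simp only [Function.comp_def, mulVecLin_apply, mulVec_mulVec, ← pow_succ'] at this
    exact this
  have h := (hasSum_nat_add_iff (f := fun k => (M ^ (k + 1)) *ᵥ (Int.cast ∘ y k)) 1).mp hMs
  rw [Finset.sum_range_one, zero_add, pow_one, add_comm] at h
  rwa [mulVec_add]

theorem mapsTo_mulVec_digitSums_add_integerPoints {A : Matrix ι ι ℤ}
    (hMA : M * A.map (Int.cast : ℤ → ℝ) = 1)
    (hK : ∀ z : ι → ℤ, ∃ k ∈ K, ∃ w : ι → ℤ, z = k + A *ᵥ w) :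
    Set.MapsTo (M *ᵥ ·) (digitSums M K + integerPoints ι) (digitSums M K + integerPoints ι) := by
  rintro _ ⟨s, hs, _, ⟨v, rfl⟩, rfl⟩
  obtain ⟨d, hd, w, rfl⟩ := hK v
  have hcast : (Int.cast ∘ (d + A *ᵥ w) : ι → ℝ) =
      Int.cast ∘ d + A.map Int.cast *ᵥ (Int.cast ∘ w) := by
    funext i
    simpa using RingHom.map_mulVec (Int.castRingHom ℝ) A w i
  have hMv : M *ᵥ (s + Int.cast ∘ (d + A *ᵥ w)) = M *ᵥ (Int.cast ∘ d + s) + Int.cast ∘ w := by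
    rw [hcast, mulVec_add, mulVec_add, mulVec_add, mulVec_mulVec, hMA, one_mulVec]
    abel
  show M *ᵥ (s + Int.cast ∘ (d + A *ᵥ w)) ∈ _
  rw [hMv]
  exact Set.add_mem_add (mulVec_add_mem_digitSums hs hd) ⟨w, rfl⟩

theorem exists_summable_norm_pow_succ_mulVec_le (hM : Summable fun m => ‖M ^ m‖)
    (K : Finset (ι → ℤ)) : ∃ u : ℕ → ℝ, Summable u ∧
      ∀ k, ∀ d ∈ K, ‖(M ^ (k + 1)) *ᵥ (Int.cast ∘ d : ι → ℝ)‖ ≤ u k := by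
  refine ⟨fun k => ‖M ^ (k + 1)‖ * ∑ d ∈ K, ‖(Int.cast ∘ d : ι → ℝ)‖,
    ((summable_nat_add_iff 1).mpr hM).mul_right _, fun k d hd => ?_⟩
  exact (linfty_opNorm_mulVec _ _).trans (mul_le_mul_of_nonneg_left
    (Finset.single_le_sum (fun _ _ => norm_nonneg _) hd) (norm_nonneg _))

theorem digitSums_eq_range (hM : Summable fun m => ‖M ^ m‖) :
    digitSums M K =
      Set.range fun x : ℕ → K => ∑' k, (M ^ (k + 1)) *ᵥ (Int.cast ∘ (x k : ι → ℤ)) := by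
  obtain ⟨u, hu, hbound⟩ := exists_summable_norm_pow_succ_mulVec_le hM K
  ext s
  constructor
  · rintro ⟨x, hx, hsum⟩
    exact ⟨fun k => ⟨x k, hx k⟩, hsum.tsum_eq⟩
  · rintro ⟨x, rfl⟩
    exact ⟨fun k => x k, fun k => (x k).2,
      (Summable.of_norm_bounded hu fun k => hbound k _ (x k).2).hasSum⟩

theorem isCompact_digitSums (hM : Summable fun m => ‖M ^ m‖) : IsCompact (digitSums M K) := by
  obtain ⟨u, hu, hbound⟩ := exists_summable_norm_pow_succ_mulVec_le hM K
  rw [digitSums_eq_range hM]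
  refine isCompact_range (continuous_tsum (fun k => ?_) hu fun k x => hbound k _ (x k).2)
  exact (continuous_of_discreteTopology (f := fun d : K =>
    (M ^ (k + 1)) *ᵥ (Int.cast ∘ (d : ι → ℤ)))).comp (continuous_apply k)

theorem digitSums_nonempty (hM : Summable fun m => ‖M ^ m‖) (hK : K.Nonempty) :
    (digitSums M K).Nonempty := by
  have := hK.to_subtype
  rw [digitSums_eq_range hM]
  exact Set.range_nonempty _

end DigitSums

/-- if `K ⊂ ℤⁿ` contains a complete set of coset representatives of
`ℤⁿ/A(ℤⁿ)`, then `Φ(…x₂x₁, v) = v + Σ_k A^{-k} x_k` is onto `ℝⁿ`. -/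
theorem stmt4 {n : ℕ} (A : Matrix (Fin n) (Fin n) ℤ) (hA : IsExpanding A)
    (K : Finset (Fin n → ℤ))
    (hK : ∀ z : Fin n → ℤ, ∃ k ∈ K, ∃ w : Fin n → ℤ, z = k + A.mulVec w) :
    ∀ p : Fin n → ℝ, ∃ (x : ℕ → (Fin n → ℤ)) (v : Fin n → ℤ) (s : Fin n → ℝ),
      (∀ k, x k ∈ K) ∧
      HasSum (fun k => ((A.map (Int.cast : ℤ → ℝ))⁻¹ ^ (k + 1)).mulVec
        (fun i => (x k i : ℝ))) s ∧
      p = (fun i => (v i : ℝ)) + s := by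
  intro p
  set M := (A.map (Int.cast : ℤ → ℝ))⁻¹
  have hM : Summable fun m => ‖M ^ m‖ := hA.summable_norm_inv_pow
  have hMA : M * A.map Int.cast = 1 := nonsing_inv_mul _ hA.isUnit_det_map_real
  obtain ⟨d, hd, -⟩ := hK 0
  have hF : digitSums M K + integerPoints (Fin n) = Set.univ :=
    eq_univ_of_mapsTo_mulVec
      ((isClosed_integerPoints _).add_left_of_isCompact (isCompact_digitSums hM))
      ((digitSums_nonempty hM ⟨d, hd⟩).add ⟨0, 0, by ext; simp⟩)
      (fun _ hq => add_intCast_mem_add_integerPoints hq)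
      (mapsTo_mulVec_digitSums_add_integerPoints hMA hK) hMA hM.tendsto_atTop_zero
  obtain ⟨s, ⟨x, hx, hsum⟩, _, ⟨v, rfl⟩, hp⟩ := hF.symm ▸ Set.mem_univ p
  exact ⟨x, v, s, hx, hsum, by rw [← hp, add_comm]; rfl⟩
end

section
/- Let C be a finite alphabet and Γ a finite directed graph with edges labeled by elements of C which is left-resolving (for each vertex, incoming edges have distinct labels). For each vertex v let F_v ⊆ C^{-ω} be the set of left-infinite label sequences readable along left-infinite paths ending at v, and let μ be the uniform Bernoulli measure on C^{-ω}. Then for every vertex v, μ(F_v) = (1/|C|) · Σ_{e : u → v} μ(F_u), where the sum is over incoming edges of v. Equivalently, the vector (μ(F_v))_v is a left eigenvector of the adjacency matrix of Γ with eigenvalue |C|, provided it is nonzero. -/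
open MeasureTheory

/-- The set of left-infinite label sequences readable along left-infinite paths
ending at `v` (the sequence `x` is `…x₂x₁` with `x 0 = x₁`). -/
def pathSet {V C : Type*} (e : V → C → V → Prop) (v : V) : Set (ℕ → C) :=
  {x | ∃ p : ℕ → V, p 0 = v ∧ ∀ k, e (p (k + 1)) (x k) (p k)}

/-!
Reading a path of length `m + 1` into `v` backwards means choosing an incoming edge `u →ᶜ v`
and then a path of length `m` into `u`; since the graph is left-resolving, distinct edges give
distinct words, so the number of readable words of length `m + 1` at `v` is the sum over
incoming edges of the counts at length `m`. Under the uniform measure a set of words of length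
`m` has mass `#words · |C|⁻ᵐ`, which turns this count recursion into the claimed identity for the
cylinder approximations of `F_v`. By compactness of `ℕ → V` (Kőnig's lemma) these
approximations decrease to `F_v`, and the identity passes to the limit.
-/

open Filter Topology Finset

namespace LabeledGraph

open Classical

variable {V C : Type*}

def initSeg (m : ℕ) (x : ℕ → C) : Fin m → C := fun i => x i

section Words

variable [Fintype C] (e : V → C → V → Prop)

noncomputable def readable (m : ℕ) (v : V) : Finset (Fin m → C) :=
  {y | ∃ p : ℕ → V, p 0 = v ∧ ∀ k : Fin m, e (p (k + 1)) (y k) (p k)}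

theorem mem_readable {m : ℕ} {v : V} {y : Fin m → C} :
    y ∈ readable e m v ↔ ∃ p : ℕ → V, p 0 = v ∧ ∀ k : Fin m, e (p (k + 1)) (y k) (p k) := by
  simp [readable]

theorem mem_readable_succ {m : ℕ} {v : V} {y : Fin (m + 1) → C} :
    y ∈ readable e (m + 1) v ↔ ∃ u, e u (y 0) v ∧ Fin.tail y ∈ readable e m u := by
  simp only [mem_readable]
  constructor
  · rintro ⟨p, rfl, hp⟩
    exact ⟨p 1, hp 0, fun k => p (k + 1), rfl, fun k => hp k.succ⟩
  · rintro ⟨u, hu, q, rfl, hq⟩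
    exact ⟨fun k => Nat.casesOn k v q, rfl, Fin.cases hu fun k => hq k⟩

theorem antitone_preimage_readable (v : V) :
    Antitone fun m => initSeg m ⁻¹' (readable e m v : Set (Fin m → C)) := by
  intro m n hmn x hx
  obtain ⟨p, hp0, hp⟩ := (mem_readable e).1 hx
  exact (mem_readable e).2 ⟨p, hp0, fun k => hp (k.castLE hmn)⟩

variable [Fintype V]

theorem pathSet_eq_iInter (v : V) :
    pathSet e v = ⋂ m, initSeg m ⁻¹' readable e m v := by
  ext x
  simp only [Set.mem_iInter, Set.mem_preimage, Finset.mem_coe, mem_readable, initSeg]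
  refine ⟨fun ⟨p, hp0, hp⟩ m => ⟨p, hp0, fun k => hp k⟩, fun hx => ?_⟩
  let _ : TopologicalSpace V := ⊥
  have _ : DiscreteTopology V := ⟨rfl⟩
  let T : ℕ → Set (ℕ → V) := fun m =>
    {p | p 0 = v} ∩ ⋂ k ∈ Set.Iio m, {p | e (p (k + 1)) (x k) (p k)}
  have hclosed : ∀ m, IsClosed (T m) := by
    refine fun m => IsClosed.inter ?_ (isClosed_biInter fun k _ => ?_)
    · exact (isClosed_discrete {v}).preimage (continuous_apply (A := fun _ => V) 0)
    · exact (isClosed_discrete {q : V × V | e q.1 (x k) q.2}).preimage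
        ((continuous_apply (A := fun _ => V) _).prodMk (continuous_apply _))
  obtain ⟨p, hp⟩ := IsCompact.nonempty_iInter_of_sequence_nonempty_isCompact_isClosed T
    (fun m => Set.inter_subset_inter_right _
      (Set.biInter_subset_biInter_left (Set.Iio_subset_Iio m.le_succ)))
    (fun m => let ⟨p, hp0, hp⟩ := hx m; ⟨p, hp0, Set.mem_iInter₂.2 fun k hk => hp ⟨k, hk⟩⟩)
    (hclosed 0).isCompact hclosed
  refine ⟨p, (Set.mem_iInter.1 hp 0).1, fun k => ?_⟩
  exact Set.mem_iInter₂.1 (Set.mem_iInter.1 hp (k + 1)).2 k k.lt_succ_self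

noncomputable def inEdges (v : V) : Finset (V × C) :=
  {q | e q.1 q.2 v}

theorem mem_inEdges {v : V} {q : V × C} : q ∈ inEdges e v ↔ e q.1 q.2 v := by
  simp [inEdges]

theorem sum_ite_eq_sum_inEdges {M : Type*} [AddCommMonoid M] (v : V) (f : V → M) :
    ∑ u, ∑ c, (if e u c v then f u else 0) = ∑ q ∈ inEdges e v, f q.1 := by
  rw [inEdges, Finset.sum_filter, Fintype.sum_prod_type]

theorem readable_succ (m : ℕ) (v : V) :
    readable e (m + 1) v =
      (inEdges e v).biUnion fun q => (readable e m q.1).image (Fin.cons q.2) := by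
  ext y
  simp only [mem_readable_succ, Finset.mem_biUnion, Finset.mem_image, mem_inEdges, Prod.exists]
  constructor
  · rintro ⟨u, hu, hy⟩
    exact ⟨u, y 0, hu, Fin.tail y, hy, Fin.cons_self_tail y⟩
  · rintro ⟨u, c, hu, t, ht, rfl⟩
    exact ⟨u, by simpa using hu, by simpa using ht⟩

theorem card_readable_succ
    (hlr : ∀ ⦃u u' : V⦄ ⦃c : C⦄ ⦃v : V⦄, e u c v → e u' c v → u = u') (m : ℕ) (v : V) :
    #(readable e (m + 1) v) = ∑ q ∈ inEdges e v, #(readable e m q.1) := by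
  rw [readable_succ, card_biUnion]
  · exact sum_congr rfl fun q _ =>
      card_image_of_injective _ (Fin.cons_right_injective (α := fun _ => C) q.2)
  · intro q hq q' hq' hne
    refine disjoint_left.2 fun y hy hy' => hne ?_
    obtain ⟨t, -, rfl⟩ := mem_image.1 hy
    obtain ⟨t', -, hcons⟩ := mem_image.1 hy'
    obtain ⟨hc, -⟩ := Fin.cons_injective2 hcons
    rw [mem_coe, mem_inEdges] at hq hq'
    exact Prod.ext (hlr hq (hc ▸ hq')) hc.symm

end Words

section Measure

variable [MeasurableSpace C]

theorem measurable_initSeg (m : ℕ) : Measurable (initSeg (C := C) m) :=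
  measurable_pi_lambda _ fun _ => measurable_pi_apply _

variable [Fintype C]

def IsUniformOnCylinders (μ : Measure (ℕ → C)) : Prop :=
  ∀ (m : ℕ) (y : Fin m → C),
    μ {f | ∀ i : Fin m, f (i : ℕ) = y i} = ((Fintype.card C : ENNReal))⁻¹ ^ m

namespace IsUniformOnCylinders

variable {μ : Measure (ℕ → C)}

theorem isProbabilityMeasure (hμ : IsUniformOnCylinders μ) : IsProbabilityMeasure μ :=
  ⟨by simpa using hμ 0 Fin.elim0⟩

variable [MeasurableSingletonClass C]

theorem map_initSeg (hμ : IsUniformOnCylinders μ) (m : ℕ) :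
    μ.map (initSeg m) = ((Fintype.card C : ENNReal)⁻¹ ^ m) • Measure.count := by
  refine Measure.ext_iff_singleton.2 fun y => ?_
  rw [Measure.map_apply (measurable_initSeg m) (measurableSet_singleton y), Measure.smul_apply,
    Measure.count_singleton, smul_eq_mul, mul_one, ← hμ m y]
  congr 1
  ext f
  simp [initSeg, funext_iff]

theorem measure_preimage_initSeg (hμ : IsUniformOnCylinders μ) {m : ℕ}
    (s : Finset (Fin m → C)) :
    μ (initSeg m ⁻¹' s) = #s * (Fintype.card C : ENNReal)⁻¹ ^ m := by
  rw [← Measure.map_apply (measurable_initSeg m) s.measurableSet, hμ.map_initSeg,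
    Measure.smul_apply, Measure.count_apply_finset, smul_eq_mul, mul_comm]

variable {V : Type*} [Fintype V] (e : V → C → V → Prop)

theorem measure_preimage_readable_succ (hμ : IsUniformOnCylinders μ)
    (hlr : ∀ ⦃u u' : V⦄ ⦃c : C⦄ ⦃v : V⦄, e u c v → e u' c v → u = u') (m : ℕ) (v : V) :
    μ (initSeg (m + 1) ⁻¹' readable e (m + 1) v) =
      (Fintype.card C : ENNReal)⁻¹ * ∑ q ∈ inEdges e v, μ (initSeg m ⁻¹' readable e m q.1) := by
  simp only [hμ.measure_preimage_initSeg, card_readable_succ e hlr, Nat.cast_sum, sum_mul,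
    mul_sum, pow_succ]
  exact sum_congr rfl fun _ _ => by ring

theorem tendsto_measure_preimage_readable (hμ : IsUniformOnCylinders μ) (v : V) :
    Tendsto (fun m => μ (initSeg m ⁻¹' readable e m v)) atTop (𝓝 (μ (pathSet e v))) := by
  have := hμ.isProbabilityMeasure
  rw [pathSet_eq_iInter]
  exact tendsto_measure_iInter_atTop
    (fun m => (measurable_initSeg m (readable e m v).measurableSet).nullMeasurableSet)
    (antitone_preimage_readable e v) ⟨0, measure_ne_top _ _⟩

end IsUniformOnCylinders

end Measure

end LabeledGraph

open Classical in
/-- for a left-resolving finite labeled graph and the uniform Bernoulli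
measure `μ`, one has `μ(F_v) = |C|⁻¹ · Σ_{edges u →ᶜ v} μ(F_u)`. -/
theorem stmt8 {V C : Type*} [Fintype V] [Fintype C] [Nonempty C]
    [MeasurableSpace C] [MeasurableSingletonClass C]
    (e : V → C → V → Prop)
    (hlr : ∀ ⦃u u' : V⦄ ⦃c : C⦄ ⦃v : V⦄, e u c v → e u' c v → u = u')
    (μ : Measure (ℕ → C))
    (hμ : ∀ (m : ℕ) (y : Fin m → C),
      μ {f | ∀ i : Fin m, f (i : ℕ) = y i} = ((Fintype.card C : ENNReal))⁻¹ ^ m) :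
    ∀ v : V, μ (pathSet e v) =
      ((Fintype.card C : ENNReal))⁻¹ *
        ∑ u : V, ∑ c : C, if e u c v then μ (pathSet e u) else 0 := by
  intro v
  have hμ : LabeledGraph.IsUniformOnCylinders μ := hμ
  have hlim := hμ.tendsto_measure_preimage_readable e
  rw [LabeledGraph.sum_ite_eq_sum_inEdges]
  refine tendsto_nhds_unique ((hlim v).comp (tendsto_add_atTop_nat 1)) ?_
  simp only [Function.comp_def, hμ.measure_preimage_readable_succ e hlr]
  exact ENNReal.Tendsto.const_mul (tendsto_finsetSum _ fun q _ => hlim q.1)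
    (Or.inr (ENNReal.inv_ne_top.2 (by simp)))
end

section
/- Let A = (3) (the 1×1 matrix acting on ℝ by multiplication by 3) and D = {0, 1, 5, 6} ⊂ ℤ. Then the self-affine set T = {Σ_{k≥1} 3^{-k} d_k : d_k ∈ D} equals [0, 4/3] ∪ [5/3, 3], and its Lebesgue measure is 8/3. -/
/-!
Let `K = [0, 4/3] ∪ [5/3, 3]` and `D = {0, 1, 5, 6}`. Every `y ∈ K` admits a digit `d ∈ D`
with `3y - d ∈ K`, so the orbit of a point of `K` under such maps `y ↦ 3y - d` stays in the
bounded set `K`, and the digits read off along it expand the point, because the remainders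
`y_n / 3^n` tend to `0`. Conversely, digits in `[0, 6]` force every expansion into `[0, 3]`, so
an expansion with first digit `d` lies in `(d + [0, 3]) / 3`, and these four intervals cover
exactly `K`.
-/

open MeasureTheory Set Filter Topology

def digitExpansions (b : ℝ) (D : Set ℤ) : Set ℝ :=
  {x | ∃ d : ℕ → ℤ, (∀ k, d k ∈ D) ∧ HasSum (fun k => (d k : ℝ) / b ^ (k + 1)) x}

section DigitExpansions

variable {b : ℝ} {D : Set ℤ}

theorem HasSum.digits_tail (hb : b ≠ 0) {d : ℕ → ℝ} {x : ℝ}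
    (h : HasSum (fun k => d k / b ^ (k + 1)) x) :
    HasSum (fun k => d (k + 1) / b ^ (k + 1)) (b * x - d 0) := by
  have key := ((hasSum_nat_add_iff' 1).2 h).mul_left b
  have hx : b * (x - ∑ i ∈ Finset.range 1, d i / b ^ (i + 1)) = b * x - d 0 := by
    rw [Finset.sum_range_one, Nat.zero_add, pow_one]
    field_simp
  have hf : (fun k => b * (d (k + 1) / b ^ (k + 1 + 1))) = fun k => d (k + 1) / b ^ (k + 1) := by
    funext k
    rw [pow_succ]
    field_simp
  rwa [hx, hf] at key

theorem exists_digit_sub_mem_digitExpansions (hb : b ≠ 0) {x : ℝ} (hx : x ∈ digitExpansions b D) :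
    ∃ d ∈ D, b * x - d ∈ digitExpansions b D := by
  obtain ⟨d, hd, hsum⟩ := hx
  exact ⟨d 0, hd 0, fun k => d (k + 1), fun k => hd (k + 1),
    hsum.digits_tail (d := fun k => d k) hb⟩

theorem hasSum_geometric_div_pow_succ (hb : 1 < b) (c : ℝ) :
    HasSum (fun k => c / b ^ (k + 1)) (c / (b - 1)) := by
  have hb0 : b ≠ 0 := by positivity
  have hb1 : b - 1 ≠ 0 := sub_ne_zero.2 hb.ne'
  have key := (hasSum_geometric_of_lt_one (inv_nonneg.2 (zero_le_one.trans hb.le))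
    (inv_lt_one_of_one_lt₀ hb)).mul_left (c / b)
  have hx : c / b * (1 - b⁻¹)⁻¹ = c / (b - 1) := by
    field_simp
  have hf : (fun k : ℕ => c / b * b⁻¹ ^ k) = fun k => c / b ^ (k + 1) := by
    funext k
    rw [inv_pow, pow_succ]
    field_simp
  rwa [hx, hf] at key

theorem digitExpansions_subset_Icc (hb : 1 < b) {c : ℝ} (hD : ∀ d ∈ D, (d : ℝ) ∈ Icc 0 c) :
    digitExpansions b D ⊆ Icc 0 (c / (b - 1)) := by
  rintro x ⟨d, hd, hx⟩
  have hpow : ∀ k : ℕ, 0 < b ^ (k + 1) := fun k => pow_pos (zero_lt_one.trans hb) _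
  exact ⟨hasSum_le (fun k => div_nonneg (hD _ (hd k)).1 (hpow k).le) hasSum_zero hx,
    hasSum_le (fun k => div_le_div_of_nonneg_right (hD _ (hd k)).2 (hpow k).le) hx
      (hasSum_geometric_div_pow_succ hb c)⟩

-- The `n`-th partial sum telescopes to `y 0 - y n / b ^ n`.
theorem hasSum_digits_of_orbit (hb : 1 < b) {M : ℝ} {y d : ℕ → ℝ} (hyM : ∀ n, |y n| ≤ M)
    (hy : ∀ n, y (n + 1) = b * y n - d n) :
    HasSum (fun k => d k / b ^ (k + 1)) (y 0) := by
  have hb0 : 0 < b := zero_lt_one.trans hb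
  set a : ℕ → ℝ := fun n => y n / b ^ n with ha_def
  have hterm : ∀ k, d k / b ^ (k + 1) = a k - a (k + 1) := by
    intro k
    simp only [ha_def, hy, pow_succ]
    field_simp
    ring
  have ha : ∀ n, ‖a n‖ ≤ M * b⁻¹ ^ n := by
    intro n
    rw [Real.norm_eq_abs, abs_div, abs_of_pos (pow_pos hb0 n), inv_pow, ← div_eq_mul_inv]
    exact div_le_div_of_nonneg_right (hyM n) (pow_pos hb0 n).le
  have hgeom : Tendsto (fun n => M * b⁻¹ ^ n) atTop (𝓝 0) := by
    simpa using (tendsto_pow_atTop_nhds_zero_of_lt_one (inv_nonneg.2 hb0.le)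
      (inv_lt_one_of_one_lt₀ hb)).const_mul M
  have hsummable : Summable fun k => a k - a (k + 1) := by
    refine Summable.of_norm_bounded (g := fun k => M * b⁻¹ ^ k + M * b⁻¹ ^ (k + 1)) ?_
      fun k => (norm_sub_le _ _).trans (add_le_add (ha k) (ha (k + 1)))
    have hgeom_summable := (summable_geometric_of_lt_one (inv_nonneg.2 hb0.le)
      (inv_lt_one_of_one_lt₀ hb)).mul_left M
    exact hgeom_summable.add ((summable_nat_add_iff 1).2 hgeom_summable)
  simp_rw [hterm]
  rw [hsummable.hasSum_iff_tendsto_nat]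
  simp_rw [Finset.sum_range_sub']
  simpa [ha_def] using tendsto_const_nhds.sub (squeeze_zero_norm ha hgeom)

theorem subset_digitExpansions (hb : 1 < b) {S : Set ℝ} (hS : Bornology.IsBounded S)
    (hcover : ∀ y ∈ S, ∃ d ∈ D, b * y - d ∈ S) : S ⊆ digitExpansions b D := by
  intro x hx
  obtain ⟨M, hM⟩ := isBounded_iff_forall_norm_le.1 hS
  choose digit hdigitD hdigitS using fun y : S => hcover y y.2
  let orbit : ℕ → S := fun n =>
    Nat.rec (motive := fun _ => S) ⟨x, hx⟩ (fun _ y => ⟨b * y - digit y, hdigitS y⟩) n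
  exact ⟨fun k => digit (orbit k), fun k => hdigitD _,
    hasSum_digits_of_orbit hb (y := fun n => orbit n) (fun n => hM _ (orbit n).2) fun _ => rfl⟩

end DigitExpansions

theorem exists_digit_three_mul_sub_mem {y : ℝ} (hy : y ∈ Icc (0 : ℝ) (4 / 3) ∪ Icc (5 / 3) 3) :
    ∃ d ∈ ({0, 1, 5, 6} : Set ℤ), 3 * y - d ∈ Icc (0 : ℝ) (4 / 3) ∪ Icc (5 / 3) 3 := by
  simp only [mem_insert_iff, mem_singleton_iff, exists_eq_or_imp, exists_eq_left, mem_union,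
    mem_Icc] at hy ⊢
  push_cast
  grind

theorem digitExpansions_three_subset :
    digitExpansions 3 {0, 1, 5, 6} ⊆ Icc (0 : ℝ) (4 / 3) ∪ Icc (5 / 3) 3 := by
  intro x hx
  obtain ⟨d, hd, htail⟩ := exists_digit_sub_mem_digitExpansions three_ne_zero hx
  have hdigits : ∀ e ∈ ({0, 1, 5, 6} : Set ℤ), (e : ℝ) ∈ Icc 0 6 := by
    simp only [mem_insert_iff, mem_singleton_iff, mem_Icc]
    rintro e (rfl | rfl | rfl | rfl) <;> norm_num
  have htail_mem := digitExpansions_subset_Icc (by norm_num) hdigits htail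
  simp only [mem_Icc, mem_union, mem_insert_iff, mem_singleton_iff] at htail_mem hd ⊢
  rcases hd with rfl | rfl | rfl | rfl <;> push_cast at htail_mem <;> grind

theorem digitExpansions_three_eq :
    digitExpansions 3 {0, 1, 5, 6} = Icc (0 : ℝ) (4 / 3) ∪ Icc (5 / 3) 3 :=
  Subset.antisymm digitExpansions_three_subset <|
    subset_digitExpansions (by norm_num)
      ((Metric.isBounded_Icc _ _).union (Metric.isBounded_Icc _ _))
      fun _ => exists_digit_three_mul_sub_mem

theorem Real.volume_Icc_union_Icc {a b c d : ℝ} (hab : a ≤ b) (hbc : b < c) (hcd : c ≤ d) :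
    volume (Icc a b ∪ Icc c d) = ENNReal.ofReal (b - a + (d - c)) := by
  have hdisj : Disjoint (Icc a b) (Icc c d) :=
    disjoint_left.2 fun _ hb hc => (hbc.trans_le hc.1).not_ge hb.2
  rw [measure_union hdisj measurableSet_Icc, Real.volume_Icc, Real.volume_Icc,
    ← ENNReal.ofReal_add (sub_nonneg.2 hab) (sub_nonneg.2 hcd)]

/-- for `A = (3)` and `D = {0,1,5,6}`, the self-affine set
`T = {Σ 3^{-k} d_k}` equals `[0, 4/3] ∪ [5/3, 3]` and has Lebesgue measure `8/3`. -/
theorem stmt15 :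
    {x : ℝ | ∃ d : ℕ → ℤ, (∀ k, d k ∈ ({0, 1, 5, 6} : Set ℤ)) ∧
        HasSum (fun k => (d k : ℝ) / 3 ^ (k + 1)) x} =
      Set.Icc (0 : ℝ) (4 / 3) ∪ Set.Icc (5 / 3) 3 ∧
    volume {x : ℝ | ∃ d : ℕ → ℤ, (∀ k, d k ∈ ({0, 1, 5, 6} : Set ℤ)) ∧
        HasSum (fun k => (d k : ℝ) / 3 ^ (k + 1)) x} = ENNReal.ofReal (8 / 3) := by
  change digitExpansions 3 {0, 1, 5, 6} = _ ∧ volume (digitExpansions 3 {0, 1, 5, 6}) = _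
  rw [digitExpansions_three_eq, Real.volume_Icc_union_Icc (by norm_num) (by norm_num) (by norm_num)]
  norm_num
end

section
/- Let A be an expanding integer n×n matrix and D ⊂ ℤⁿ a complete set of coset representatives of ℤⁿ/A(ℤⁿ) (so |D| = |det A|), and let T = {Σ_{k≥1} A^{-k} d_k : d_k ∈ D} be the associated self-affine set. Then the translates {T + z : z ∈ ℤⁿ} cover ℝⁿ, i.e., ⋃_{z∈ℤⁿ} (T + z) = ℝⁿ. -/
open scoped NNReal ENNReal

attribute [local instance] Matrix.linftyOpNormedAddCommGroup Matrix.linftyOpNormedRing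
  Matrix.linftyOpNormedAlgebra

noncomputable instance mycomplete {n : ℕ} : CompleteSpace (Matrix (Fin n) (Fin n) ℂ) :=
  FiniteDimensional.complete ℂ _

open Polynomial in
lemma my_eval_charpoly {n : ℕ} {R : Type*} [CommRing R] (M : Matrix (Fin n) (Fin n) R) (ν : R) :
    M.charpoly.eval ν = (ν • (1 : Matrix (Fin n) (Fin n) R) - M).det := by
  rw [Matrix.charpoly, ← Polynomial.coe_evalRingHom, RingHom.map_det]
  congr 1
  ext i j
  by_cases h : i = j
  · subst h; simp [Matrix.charmatrix_apply_eq, Matrix.one_apply, Matrix.smul_apply]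
  · simp [Matrix.charmatrix_apply_ne _ _ _ h, Matrix.one_apply, h, Matrix.smul_apply]

open Polynomial in
lemma mem_spectrum_isRoot {n : ℕ} (M : Matrix (Fin n) (Fin n) ℂ) (ν : ℂ)
    (h : ν ∈ spectrum ℂ M) : M.charpoly.IsRoot ν := by
  rw [spectrum.mem_iff] at h
  rw [Polynomial.IsRoot, my_eval_charpoly]
  by_contra hdet
  apply h
  rw [show (algebraMap ℂ (Matrix (Fin n) (Fin n) ℂ)) ν - M = ν • 1 - M by
    rw [Algebra.algebraMap_eq_smul_one]]
  exact (Matrix.isUnit_iff_isUnit_det _).mpr (isUnit_iff_ne_zero.mpr hdet)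

lemma expanding_det_ne {n : ℕ} (A : Matrix (Fin n) (Fin n) ℤ) (hA : IsExpanding A) :
    (A.map (Int.cast : ℤ → ℂ)).det ≠ 0 := by
  intro h
  have h0 : (A.map (Int.cast : ℤ → ℂ)).charpoly.IsRoot 0 := by
    rw [Polynomial.IsRoot, my_eval_charpoly]
    simp [Matrix.det_neg, h]
  exact absurd (hA 0 h0) (by norm_num)

lemma map_intCast_comm {n : ℕ} (A : Matrix (Fin n) (Fin n) ℤ) :
    (A.map (Int.cast : ℤ → ℝ)).map (Complex.ofRealHom : ℝ →+* ℂ)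
      = A.map (Int.cast : ℤ → ℂ) := by
  rw [Matrix.map_map]
  congr 1

lemma expanding_det_ne_real {n : ℕ} (A : Matrix (Fin n) (Fin n) ℤ) (hA : IsExpanding A) :
    (A.map (Int.cast : ℤ → ℝ)).det ≠ 0 := by
  intro h
  apply expanding_det_ne A hA
  rw [← map_intCast_comm, ← RingHom.mapMatrix_apply, ← RingHom.map_det, h, map_zero]

lemma norm_pow_decay {n : ℕ} (A : Matrix (Fin n) (Fin n) ℤ) (hA : IsExpanding A) :
    ∃ C r : ℝ, 1 ≤ C ∧ 0 < r ∧ r < 1 ∧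
      ∀ m : ℕ, ‖(A.map (Int.cast : ℤ → ℝ))⁻¹ ^ m‖ ≤ C * r ^ m := by
  set Ac := A.map (Int.cast : ℤ → ℂ) with hAcdef
  set Bc := Ac⁻¹ with hBcdef
  set B := (A.map (Int.cast : ℤ → ℝ))⁻¹ with hBdef
  have hdetc : Ac.det ≠ 0 := expanding_det_ne A hA
  have hdetu : IsUnit Ac.det := isUnit_iff_ne_zero.mpr hdetc
  have hBA : Bc * Ac = 1 := Matrix.nonsing_inv_mul Ac hdetu
  have hdetBc : Bc.det ≠ 0 := by
    intro h
    have h2 := congrArg Matrix.det hBA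
    rw [Matrix.det_mul, h, zero_mul, Matrix.det_one] at h2
    norm_num at h2
  have hroot : ∀ ν : ℂ, Bc.charpoly.IsRoot ν → ‖ν‖₊ < 1 := by
    intro ν hν
    rw [Polynomial.IsRoot, my_eval_charpoly] at hν
    have hν0 : ν ≠ 0 := by
      intro h; subst h
      rw [zero_smul, zero_sub, Matrix.det_neg] at hν
      simp [hdetBc] at hν
    have h1 : (ν • (1 : Matrix (Fin n) (Fin n) ℂ) - Bc) = Bc * (ν • Ac - 1) := by
      rw [Matrix.mul_sub, mul_one, Matrix.mul_smul, hBA]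
    have h2 : (ν • Ac - 1 : Matrix (Fin n) (Fin n) ℂ).det = 0 := by
      rw [h1, Matrix.det_mul] at hν
      rcases mul_eq_zero.mp hν with h | h
      · exact absurd h hdetBc
      · exact h
    have h3 : (ν • (Ac - ν⁻¹ • 1) : Matrix (Fin n) (Fin n) ℂ) = ν • Ac - 1 := by
      rw [smul_sub, smul_smul, mul_inv_cancel₀ hν0, one_smul]
    have h4 : ((ν⁻¹ • 1 - Ac : Matrix (Fin n) (Fin n) ℂ)).det = 0 := by
      rw [← h3, Matrix.det_smul] at h2
      rcases mul_eq_zero.mp h2 with h | h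
      · exact absurd h (pow_ne_zero _ hν0)
      · rw [show (ν⁻¹ • 1 - Ac : Matrix (Fin n) (Fin n) ℂ) = -(Ac - ν⁻¹ • 1) from
          (neg_sub _ _).symm, Matrix.det_neg, h, mul_zero]
    have h5 : Ac.charpoly.IsRoot ν⁻¹ := by rw [Polynomial.IsRoot, my_eval_charpoly]; exact h4
    have h6 := hA ν⁻¹ h5
    rw [norm_inv] at h6
    have h0 : 0 < ‖ν‖ := norm_pos_iff.mpr hν0
    have habs : ‖ν‖ < 1 := by
      nlinarith [mul_inv_cancel₀ (ne_of_gt h0)]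
    have : ‖ν‖ < 1 := by exact habs
    exact_mod_cast this
  have hp0 : Bc.charpoly ≠ 0 := Bc.charpoly_monic.ne_zero
  set r₀ : ℝ≥0 := Bc.charpoly.roots.toFinset.sup (fun ν => ‖ν‖₊) with hr₀def
  have hr₀ : r₀ < 1 := by
    rw [hr₀def]
    refine (Finset.sup_lt_iff (by norm_num)).mpr ?_
    intro ν hν
    exact hroot ν (Polynomial.isRoot_of_mem_roots (Multiset.mem_toFinset.mp hν))
  have hsr : spectralRadius ℂ Bc ≤ (r₀ : ℝ≥0∞) := by
    rw [spectralRadius]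
    refine iSup₂_le fun ν hν => ?_
    have h1 := mem_spectrum_isRoot Bc ν hν
    have h2 : ν ∈ Bc.charpoly.roots.toFinset :=
      Multiset.mem_toFinset.mpr (Polynomial.mem_roots'.mpr ⟨hp0, h1⟩)
    exact ENNReal.coe_le_coe.mpr (Finset.le_sup h2)
  set r₁ : ℝ≥0 := (r₀ + 1) / 2 with hr₁def
  have hr₀r₁ : r₀ < r₁ := by
    rw [← NNReal.coe_lt_coe] at hr₀ ⊢
    push_cast [hr₁def]
    push_cast at hr₀
    linarith
  have hr₁1 : r₁ < 1 := by
    rw [← NNReal.coe_lt_coe] at hr₀ ⊢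
    push_cast [hr₁def]
    push_cast at hr₀
    linarith
  have hr₁0 : 0 < r₁ := by
    rw [← NNReal.coe_lt_coe]
    push_cast [hr₁def]
    positivity
  have hspec : spectralRadius ℂ Bc < (r₁ : ℝ≥0∞) :=
    lt_of_le_of_lt hsr (ENNReal.coe_lt_coe.mpr hr₀r₁)
  -- Gelfand
  have G := spectrum.pow_nnnorm_pow_one_div_tendsto_nhds_spectralRadius Bc
  have hev : ∀ᶠ m : ℕ in Filter.atTop,
      ((‖Bc ^ m‖₊ : ℝ≥0∞) ^ (1 / (m : ℕ) : ℝ)) < (r₁ : ℝ≥0∞) :=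
    G.eventually_lt_const hspec
  obtain ⟨N, hN⟩ := hev.exists_forall_of_atTop
  have hbig : ∀ m : ℕ, N + 1 ≤ m → ‖Bc ^ m‖₊ ≤ r₁ ^ m := by
    intro m hm
    have h := hN m (le_trans (Nat.le_succ N) hm)
    have hm0 : 0 < m := lt_of_lt_of_le (Nat.succ_pos N) hm
    have hmne : (m : ℝ) ≠ 0 := Nat.cast_ne_zero.mpr hm0.ne'
    have h2 : ((‖Bc ^ m‖₊ : ℝ≥0∞) ^ (1 / (m : ℕ) : ℝ)) ^ (m : ℝ) ≤ (r₁ : ℝ≥0∞) ^ (m : ℝ) :=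
      ENNReal.rpow_le_rpow h.le (by positivity)
    rw [← ENNReal.rpow_mul, one_div, inv_mul_cancel₀ hmne, ENNReal.rpow_one,
      ENNReal.rpow_natCast] at h2
    exact_mod_cast h2
  have hdetr : (A.map (Int.cast : ℤ → ℝ)).det ≠ 0 := expanding_det_ne_real A hA
  have hmapB : B.map (Complex.ofRealHom : ℝ →+* ℂ) = Bc := by
    symm
    apply Matrix.inv_eq_right_inv
    rw [hAcdef, ← map_intCast_comm, hBdef, ← Matrix.map_mul,
      Matrix.mul_nonsing_inv _ (isUnit_iff_ne_zero.mpr hdetr),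
      Matrix.map_one _ (map_zero _) (map_one _)]
  have hpowB : ∀ m : ℕ, (B ^ m).map (Complex.ofRealHom : ℝ →+* ℂ) = Bc ^ m := by
    intro m
    rw [← RingHom.mapMatrix_apply, map_pow, RingHom.mapMatrix_apply, hmapB]
  have hnn : ∀ m : ℕ, ‖B ^ m‖₊ = ‖Bc ^ m‖₊ := by
    intro m
    rw [← hpowB m]
    simp [Matrix.linfty_opNNNorm_def, Matrix.map_apply]
  have hnorm : ∀ m : ℕ, N + 1 ≤ m → ‖B ^ m‖ ≤ (r₁ : ℝ) ^ m := by
    intro m hm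
    have h := hbig m hm
    rw [← hnn m] at h
    calc ‖B ^ m‖ = ((‖B ^ m‖₊ : ℝ≥0) : ℝ) := (coe_nnnorm _).symm
    _ ≤ ((r₁ ^ m : ℝ≥0) : ℝ) := NNReal.coe_le_coe.mpr h
    _ = (r₁ : ℝ) ^ m := by push_cast; ring
  set C : ℝ := 1 + ∑ j ∈ Finset.range (N + 1), ‖B ^ j‖ / (r₁ : ℝ) ^ j with hCdef
  have hrpos : (0:ℝ) < (r₁ : ℝ) := by exact_mod_cast hr₁0
  have hsum0 : (0:ℝ) ≤ ∑ j ∈ Finset.range (N + 1), ‖B ^ j‖ / (r₁ : ℝ) ^ j :=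
    Finset.sum_nonneg fun j _ => div_nonneg (norm_nonneg _) (le_of_lt (pow_pos hrpos j))
  have hC1 : (1:ℝ) ≤ C := by rw [hCdef]; linarith
  refine ⟨C, (r₁ : ℝ), hC1, hrpos, by exact_mod_cast hr₁1, ?_⟩
  intro m
  rcases le_or_gt (N + 1) m with hm | hm
  · calc ‖B ^ m‖ ≤ (r₁ : ℝ) ^ m := hnorm m hm
    _ = 1 * (r₁ : ℝ) ^ m := (one_mul _).symm
    _ ≤ C * (r₁ : ℝ) ^ m :=
        mul_le_mul_of_nonneg_right hC1 (le_of_lt (pow_pos hrpos m))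
  · have hmem : m ∈ Finset.range (N + 1) := Finset.mem_range.mpr hm
    have hterm : ‖B ^ m‖ / (r₁ : ℝ) ^ m ≤ C := by
      have h := Finset.single_le_sum (f := fun j => ‖B ^ j‖ / (r₁ : ℝ) ^ j)
        (fun j _ => div_nonneg (norm_nonneg _) (le_of_lt (pow_pos hrpos j))) hmem
      rw [hCdef]
      linarith
    calc ‖B ^ m‖ = (‖B ^ m‖ / (r₁ : ℝ) ^ m) * (r₁ : ℝ) ^ m := by
          field_simp
    _ ≤ C * (r₁ : ℝ) ^ m := mul_le_mul_of_nonneg_right hterm (le_of_lt (pow_pos hrpos m))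

set_option maxHeartbeats 2000000 in
/-- if `D` is a complete set of coset representatives of `ℤⁿ/A(ℤⁿ)`,
then the integer translates of `T = {Σ A^{-k} d_k : d_k ∈ D}` cover `ℝⁿ`. -/
theorem stmt16 {n : ℕ} (A : Matrix (Fin n) (Fin n) ℤ) (hA : IsExpanding A)
    (D : Finset (Fin n → ℤ))
    (hD : ∀ z : Fin n → ℤ, ∃! d : Fin n → ℤ, d ∈ D ∧ ∃ w : Fin n → ℤ, z = d + A.mulVec w) :
    (⋃ z : Fin n → ℤ, (fun x => x + fun i => (z i : ℝ)) ''
      {x : Fin n → ℝ | ∃ d : ℕ → (Fin n → ℤ), (∀ k, d k ∈ D) ∧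
        HasSum (fun k => ((A.map (Int.cast : ℤ → ℝ))⁻¹ ^ (k + 1)).mulVec
          (fun i => (d k i : ℝ))) x}) = Set.univ := by
  set Aℝ : Matrix (Fin n) (Fin n) ℝ := A.map (Int.cast : ℤ → ℝ) with hARdef
  set B : Matrix (Fin n) (Fin n) ℝ := Aℝ⁻¹ with hBdef
  set cv : (Fin n → ℤ) → (Fin n → ℝ) := fun z i => (z i : ℝ) with hcvdef
  obtain ⟨C, r, hC1, hr0, hr1, hCr⟩ := norm_pow_decay A hA
  obtain ⟨d₀, ⟨hd₀D, _⟩, -⟩ := hD 0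
  obtain ⟨M₀, hM₀⟩ : ∃ M : ℝ, ∀ d ∈ D, ‖cv d‖ ≤ M :=
    ⟨D.sup' ⟨d₀, hd₀D⟩ fun d => ‖cv d‖, fun d hd => Finset.le_sup' (fun d => ‖cv d‖) hd⟩
  have hM₀0 : 0 ≤ M₀ := le_trans (norm_nonneg _) (hM₀ d₀ hd₀D)
  have hdetr : Aℝ.det ≠ 0 := expanding_det_ne_real A hA
  have hBA : B * Aℝ = 1 := Matrix.nonsing_inv_mul Aℝ (isUnit_iff_ne_zero.mpr hdetr)
  have hcast : ∀ (d w : Fin n → ℤ), cv (d + A.mulVec w) = cv d + Aℝ.mulVec (cv w) := by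
    intro d w
    funext i
    simp only [hcvdef, Pi.add_apply, Int.cast_add, Matrix.mulVec, dotProduct,
      Matrix.map_apply, hARdef]
    push_cast
    ring
  -- summability bounds
  set c : ℕ → ℝ := fun k => C * r ^ (k + 1) * M₀ with hcdef
  have hc_sum : Summable c := by
    have h := (summable_geometric_of_lt_one hr0.le hr1).mul_left (C * r * M₀)
    apply h.congr
    intro k
    simp only [hcdef]
    ring
  have hterm : ∀ (e : ℕ → Fin n → ℤ), (∀ k, e k ∈ D) →
      ∀ k, ‖(B ^ (k + 1)).mulVec (cv (e k))‖ ≤ c k := by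
    intro e he k
    calc ‖(B ^ (k + 1)).mulVec (cv (e k))‖ ≤ ‖B ^ (k + 1)‖ * ‖cv (e k)‖ :=
          Matrix.linfty_opNorm_mulVec _ _
    _ ≤ (C * r ^ (k + 1)) * M₀ :=
          mul_le_mul (hCr (k + 1)) (hM₀ _ (he k)) (norm_nonneg _) (by positivity)
    _ = c k := by rw [hcdef]
  have hSummable : ∀ (e : ℕ → Fin n → ℤ), (∀ k, e k ∈ D) →
      Summable (fun k => (B ^ (k + 1)).mulVec (cv (e k))) := fun e he =>
    Summable.of_norm_bounded hc_sum (hterm e he)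
  set K₀ : ℝ := C * M₀ * r * (1 - r)⁻¹ with hK₀def
  have hK₀0 : 0 ≤ K₀ := by
    have : (0:ℝ) ≤ (1 - r)⁻¹ := inv_nonneg.mpr (by linarith)
    positivity
  have htail : ∀ m : ℕ, ∑' k, c (k + m) = K₀ * r ^ m := by
    intro m
    have h1 : ∀ k, c (k + m) = (C * M₀ * r * r ^ m) * r ^ k := by
      intro k
      simp only [hcdef, pow_add, pow_succ]
      ring
    rw [tsum_congr h1, tsum_mul_left, tsum_geometric_of_lt_one hr0.le hr1, hK₀def]
    ring
  have htail0 : ∑' k, c k = K₀ := by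
    have := htail 0
    simp only [Nat.add_zero, pow_zero, mul_one] at this
    exact this
  -- finite expansion
  have hexp : ∀ m : ℕ, ∀ v : Fin n → ℤ, ∃ z : Fin n → ℤ, ∃ e : ℕ → Fin n → ℤ,
      (∀ k, e k ∈ D) ∧ (B ^ m).mulVec (cv v)
        = cv z + ∑ k ∈ Finset.range m, (B ^ (k + 1)).mulVec (cv (e k)) := by
    intro m
    induction m with
    | zero =>
      intro v
      exact ⟨v, fun _ => d₀, fun _ => hd₀D, by simp [Matrix.one_mulVec]⟩
    | succ m ih =>
      intro v
      obtain ⟨d, ⟨hdD, w, hw⟩, -⟩ := hD v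
      obtain ⟨z, e, heD, hee⟩ := ih w
      refine ⟨z, fun k => if k = m then d else e k, fun k => ?_, ?_⟩
      · by_cases h : k = m <;> simp [h, hdD, heD k]
      · have hv : cv v = cv d + Aℝ.mulVec (cv w) := by rw [hw]; exact hcast d w
        have h1 : (B ^ (m + 1)).mulVec (Aℝ.mulVec (cv w)) = (B ^ m).mulVec (cv w) := by
          rw [Matrix.mulVec_mulVec, pow_succ, mul_assoc, hBA, mul_one]
        have h2 : ∑ k ∈ Finset.range m,
            (B ^ (k + 1)).mulVec (cv (if k = m then d else e k))
            = ∑ k ∈ Finset.range m, (B ^ (k + 1)).mulVec (cv (e k)) :=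
          Finset.sum_congr rfl fun k hk => by
            rw [if_neg (Finset.mem_range.mp hk).ne]
        rw [hv, Matrix.mulVec_add, h1, hee, Finset.sum_range_succ, h2]
        simp only [if_pos rfl, if_true]
        abel
  -- approximants
  rw [Set.eq_univ_iff_forall]
  intro x
  set v : ℕ → Fin n → ℤ := fun m i => ⌊(Aℝ ^ m).mulVec x i⌋ with hvdef
  have herr : ∀ m, ‖(Aℝ ^ m).mulVec x - cv (v m)‖ ≤ 1 := by
    intro m
    rw [pi_norm_le_iff_of_nonneg (by norm_num)]
    intro i
    simp only [Pi.sub_apply, hcvdef, hvdef]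
    rw [Int.self_sub_floor, Real.norm_eq_abs, abs_of_nonneg (Int.fract_nonneg _)]
    exact (Int.fract_lt_one _).le
  have hxm : ∀ m, x = (B ^ m).mulVec ((Aℝ ^ m).mulVec x) := by
    intro m
    rw [Matrix.mulVec_mulVec, hBdef, Matrix.inv_pow',
      Matrix.nonsing_inv_mul _ (isUnit_iff_ne_zero.mpr (by rw [Matrix.det_pow]; exact pow_ne_zero _ hdetr)),
      Matrix.one_mulVec]
  have happrox : ∀ m, ‖x - (B ^ m).mulVec (cv (v m))‖ ≤ C * r ^ m := by
    intro m
    calc ‖x - (B ^ m).mulVec (cv (v m))‖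
        = ‖(B ^ m).mulVec ((Aℝ ^ m).mulVec x - cv (v m))‖ := by
          rw [Matrix.mulVec_sub]; congr 1; rw [← hxm m]
    _ ≤ ‖B ^ m‖ * ‖(Aℝ ^ m).mulVec x - cv (v m)‖ := Matrix.linfty_opNorm_mulVec _ _
    _ ≤ (C * r ^ m) * 1 :=
          mul_le_mul (hCr m) (herr m) (norm_nonneg _) (by positivity)
    _ = C * r ^ m := mul_one _
  have hex2 : ∀ m : ℕ, ∃ z : Fin n → ℤ, ∃ e : ℕ → Fin n → ℤ,
      (∀ k, e k ∈ D) ∧ (B ^ m).mulVec (cv (v m))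
        = cv z + ∑ k ∈ Finset.range m, (B ^ (k + 1)).mulVec (cv (e k)) :=
    fun m => hexp m (v m)
  choose z e heD hee using hex2
  set f : ℕ → ℕ → (Fin n → ℝ) := fun m k => (B ^ (k + 1)).mulVec (cv (e m k)) with hfdef
  have hfs : ∀ m, Summable (f m) := fun m => hSummable (e m) (heD m)
  have hnorm_sum : ∀ m, Summable (fun k => ‖f m k‖) := fun m =>
    Summable.of_nonneg_of_le (fun k => norm_nonneg _) (hterm (e m) (heD m)) hc_sum
  have hsum_split : ∀ m, ∑ k ∈ Finset.range m, f m k + ∑' k, f m (k + m) = ∑' k, f m k :=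
    fun m => Summable.sum_add_tsum_nat_add m (hfs m)
  have htailnorm : ∀ m, ‖∑' k, f m (k + m)‖ ≤ K₀ * r ^ m := by
    intro m
    calc ‖∑' k, f m (k + m)‖ ≤ ∑' k, ‖f m (k + m)‖ :=
          norm_tsum_le_tsum_norm ((summable_nat_add_iff m).mpr (hnorm_sum m))
    _ ≤ ∑' k, c (k + m) :=
          Summable.tsum_le_tsum (fun k => hterm (e m) (heD m) (k + m))
            ((summable_nat_add_iff m).mpr (hnorm_sum m))
            ((summable_nat_add_iff m).mpr hc_sum)
    _ = K₀ * r ^ m := htail m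
  have hxp : ∀ m, ‖x - (cv (z m) + ∑' k, f m k)‖ ≤ (C + K₀) * r ^ m := by
    intro m
    have h1 : cv (z m) + ∑' k, f m k
        = (B ^ m).mulVec (cv (v m)) + ∑' k, f m (k + m) := by
      conv_lhs => rw [← hsum_split m]
      rw [hee m]
      abel
    rw [h1, show x - ((B ^ m).mulVec (cv (v m)) + ∑' k, f m (k + m))
        = (x - (B ^ m).mulVec (cv (v m))) - ∑' k, f m (k + m) by abel]
    calc ‖(x - (B ^ m).mulVec (cv (v m))) - ∑' k, f m (k + m)‖
        ≤ ‖x - (B ^ m).mulVec (cv (v m))‖ + ‖∑' k, f m (k + m)‖ := norm_sub_le _ _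
    _ ≤ C * r ^ m + K₀ * r ^ m := add_le_add (happrox m) (htailnorm m)
    _ = (C + K₀) * r ^ m := by ring
  have hCK0 : 0 ≤ C + K₀ := by linarith
  have hrm1 : ∀ m : ℕ, r ^ m ≤ 1 := fun m => pow_le_one₀ hr0.le hr1.le
  have hfullnorm : ∀ m, ‖∑' k, f m k‖ ≤ K₀ := by
    intro m
    calc ‖∑' k, f m k‖ ≤ ∑' k, ‖f m k‖ := norm_tsum_le_tsum_norm (hnorm_sum m)
    _ ≤ ∑' k, c k := Summable.tsum_le_tsum (hterm (e m) (heD m)) (hnorm_sum m) hc_sum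
    _ = K₀ := htail0
  have hzb : ∀ m, ‖cv (z m)‖ ≤ ‖x‖ + (C + K₀) + K₀ := by
    intro m
    have h1 : cv (z m) = ((cv (z m) + ∑' k, f m k) - x) + x - ∑' k, f m k := by abel
    have h3 : ‖(cv (z m) + ∑' k, f m k) - x‖ ≤ C + K₀ := by
      rw [norm_sub_rev]
      calc ‖x - (cv (z m) + ∑' k, f m k)‖ ≤ (C + K₀) * r ^ m := hxp m
      _ ≤ (C + K₀) * 1 := mul_le_mul_of_nonneg_left (hrm1 m) hCK0
      _ = C + K₀ := mul_one _
    calc ‖cv (z m)‖ = ‖((cv (z m) + ∑' k, f m k) - x) + x - ∑' k, f m k‖ := by rw [← h1]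
    _ ≤ ‖((cv (z m) + ∑' k, f m k) - x) + x‖ + ‖∑' k, f m k‖ := norm_sub_le _ _
    _ ≤ (‖(cv (z m) + ∑' k, f m k) - x‖ + ‖x‖) + ‖∑' k, f m k‖ :=
          add_le_add_left (norm_add_le _ _) _
    _ ≤ (C + K₀ + ‖x‖) + K₀ := add_le_add (add_le_add_left h3 _) (hfullnorm m)
    _ = ‖x‖ + (C + K₀) + K₀ := by ring
  set R : ℝ := ‖x‖ + (C + K₀) + K₀ with hRdef
  set N₀ : ℤ := ⌈R⌉ with hN₀def
  have hzmem : ∀ m, z m ∈ Fintype.piFinset (fun _ : Fin n => Finset.Icc (-N₀) N₀) := by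
    intro m
    rw [Fintype.mem_piFinset]
    intro i
    rw [Finset.mem_Icc]
    have h0 : ‖cv (z m) i‖ ≤ ‖cv (z m)‖ := norm_le_pi_norm (cv (z m)) i
    have h1 : |(z m i : ℝ)| ≤ R := le_trans h0 (hzb m)
    have hceil := Int.le_ceil R
    have h2 : (z m i : ℝ) ≤ (N₀ : ℝ) := le_trans (le_abs_self _) (le_trans h1 hceil)
    have h3 : ((-N₀ : ℤ) : ℝ) ≤ (z m i : ℝ) := by
      push_cast
      have h4 := (abs_le.mp h1).1
      linarith
    exact ⟨by exact_mod_cast h3, by exact_mod_cast h2⟩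
  set Kz : Set (Fin n → ℝ) :=
    cv '' ↑(Fintype.piFinset (fun _ : Fin n => Finset.Icc (-N₀) N₀)) with hKzdef
  set Kd : Set (Fin n → ℝ) := cv '' ↑D with hKddef
  have hKzc : IsCompact Kz := ((Fintype.piFinset _).finite_toSet.image cv).isCompact
  have hKdc : IsCompact Kd := (D.finite_toSet.image cv).isCompact
  set KK : Set ((Fin n → ℝ) × (ℕ → Fin n → ℝ)) :=
    Kz ×ˢ Set.univ.pi (fun _ : ℕ => Kd) with hKKdef
  have hKK : IsCompact KK := hKzc.prod (isCompact_univ_pi fun _ => hKdc)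
  haveI : CompactSpace ↥KK := isCompact_iff_compactSpace.mp hKK
  set G : ↥KK → (Fin n → ℝ) := fun p =>
    (p : (Fin n → ℝ) × (ℕ → Fin n → ℝ)).1
      + ∑' k, (B ^ (k + 1)).mulVec ((p : (Fin n → ℝ) × (ℕ → Fin n → ℝ)).2 k) with hGdef
  have hGc : Continuous G := by
    apply Continuous.add
    · exact continuous_subtype_val.fst
    · apply continuous_tsum (u := c)
      · intro k
        exact Continuous.matrix_mulVec continuous_const
          ((continuous_apply k).comp continuous_subtype_val.snd)
      · exact hc_sum
      · intro k p
        obtain ⟨d, hdD, hd⟩ := p.2.2 k (Set.mem_univ k)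
        rw [← hd]
        exact hterm (fun _ => d) (fun _ => hdD) k
  have hGclosed : IsClosed (Set.range G) := (isCompact_range hGc).isClosed
  set q : ℕ → ↥KK := fun m => ⟨(cv (z m), fun k => cv (e m k)),
    ⟨Set.mem_image_of_mem cv (Finset.mem_coe.mpr (hzmem m)),
      fun k _ => Set.mem_image_of_mem cv (heD m k)⟩⟩ with hqdef
  have hGq : ∀ m, G (q m) = cv (z m) + ∑' k, f m k := fun m => rfl
  have htends0 : Filter.Tendsto (fun m : ℕ => (C + K₀) * r ^ m) Filter.atTop (nhds 0) := by
    simpa using (tendsto_pow_atTop_nhds_zero_of_lt_one hr0.le hr1).const_mul (C + K₀)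
  have htendsto : Filter.Tendsto (fun m => G (q m)) Filter.atTop (nhds x) := by
    rw [tendsto_iff_norm_sub_tendsto_zero]
    apply squeeze_zero (fun m => norm_nonneg _) (fun m => ?_) htends0
    rw [hGq m, norm_sub_rev]
    exact hxp m
  have hxmem : x ∈ Set.range G :=
    hGclosed.mem_of_tendsto htendsto (Filter.Eventually.of_forall fun m => Set.mem_range_self (q m))
  obtain ⟨p, hp⟩ := hxmem
  obtain ⟨zz, hzz, hzzeq⟩ := p.2.1
  choose dig hdigD hdig using fun k => p.2.2 k (Set.mem_univ k)
  rw [Set.mem_iUnion]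
  refine ⟨zz, ?_⟩
  rw [Set.mem_image]
  refine ⟨∑' k, (B ^ (k + 1)).mulVec (cv (dig k)), ⟨dig, fun k => hdigD k, ?_⟩, ?_⟩
  · exact (hSummable dig fun k => hdigD k).hasSum
  · have h1 : (fun k => (B ^ (k + 1)).mulVec ((p : (Fin n → ℝ) × (ℕ → Fin n → ℝ)).2 k))
        = fun k => (B ^ (k + 1)).mulVec (cv (dig k)) := funext fun k => by rw [hdig k]
    have h2 : x = cv zz + ∑' k, (B ^ (k + 1)).mulVec (cv (dig k)) := by
      calc x = G p := hp.symm
      _ = (p : (Fin n → ℝ) × (ℕ → Fin n → ℝ)).1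
            + ∑' k, (B ^ (k + 1)).mulVec ((p : (Fin n → ℝ) × (ℕ → Fin n → ℝ)).2 k) := rfl
      _ = cv zz + ∑' k, (B ^ (k + 1)).mulVec (cv (dig k)) := by rw [← hzzeq, h1]
    show (∑' k, (B ^ (k + 1)).mulVec (cv (dig k))) + cv zz = x
    rw [h2]
    abel
end

section
/- Let A be an expanding integer n×n matrix and K ⊂ ℤⁿ finite. In the directed graph Γ with vertex set ℤⁿ and an edge u → v whenever u + x = y + A v for some x, y ∈ K, the nucleus 𝒩 (the set of vertices lying on a directed cycle or reachable by a directed path from a cycle) is finite. -/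
open Filter Finset Matrix
open scoped NNReal

section AffineContraction

variable {α : Type*} {r : α → α → Prop} {f : α → ℝ} {c R : ℝ}

theorem Relation.ReflTransGen.le_of_contracting (hc : 0 ≤ c)
    (hr : ∀ a b, r a b → f b - R ≤ c * (f a - R)) {u v : α}
    (huv : Relation.ReflTransGen r u v) (hu : f u ≤ R) : f v ≤ R := by
  induction huv with
  | refl => exact hu
  | tail _ hbc ih => nlinarith [hr _ _ hbc]

theorem Relation.TransGen.le_of_cycle_of_contracting (hc₀ : 0 ≤ c) (hc₁ : c < 1)
    (hr : ∀ a b, r a b → f b - R ≤ c * (f a - R)) {u : α}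
    (hu : Relation.TransGen r u u) : f u ≤ R := by
  by_contra! hRu
  have key : ∀ w, Relation.TransGen r u w → f w - R ≤ c * (f u - R) := by
    intro w huw
    induction huw with
    | single hub => exact hr _ _ hub
    | tail _ hbc ih =>
      calc _ ≤ c * (f _ - R) := hr _ _ hbc
        _ ≤ c * (c * (f u - R)) := mul_le_mul_of_nonneg_left ih hc₀
        _ ≤ c * (f u - R) := by
          nlinarith [mul_nonneg (mul_nonneg hc₀ (sub_pos.mpr hRu).le) (sub_nonneg.mpr hc₁.le)]
  nlinarith [key u hu]

end AffineContraction

namespace Module.End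

variable {S E : Type*} [Semiring S] [SeminormedAddCommGroup E] [Module S E]

noncomputable def adaptedNorm (T : Module.End S E) (c : ℝ) (k : ℕ) (v : E) : ℝ :=
  ∑ j ∈ range k, ‖(T ^ j) v‖ / c ^ j

variable {T : Module.End S E} {c : ℝ} {k : ℕ}

theorem norm_le_adaptedNorm (hc : 0 ≤ c) (hk : 0 < k) (v : E) : ‖v‖ ≤ T.adaptedNorm c k v := by
  simpa [adaptedNorm] using single_le_sum (f := fun j => ‖(T ^ j) v‖ / c ^ j)
    (fun j _ => by positivity) (mem_range.mpr hk)

theorem adaptedNorm_add_le (hc : 0 ≤ c) (v w : E) :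
    T.adaptedNorm c k (v + w) ≤ T.adaptedNorm c k v + T.adaptedNorm c k w := by
  rw [adaptedNorm, adaptedNorm, adaptedNorm, ← sum_add_distrib]
  gcongr with j
  rw [← add_div, map_add]
  gcongr
  exact norm_add_le _ _

theorem adaptedNorm_apply_le (hc : 0 < c) (hk : 0 < k) {v : E}
    (hv : ‖(T ^ k) v‖ ≤ c ^ k * ‖v‖) :
    T.adaptedNorm c k (T v) ≤ c * T.adaptedNorm c k v := by
  obtain ⟨m, rfl⟩ := Nat.exists_eq_add_one_of_ne_zero hk.ne'
  have hshift : ∀ j, (T ^ j) (T v) = (T ^ (j + 1)) v := fun j => by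
    rw [pow_succ, Module.End.mul_apply]
  calc T.adaptedNorm c (m + 1) (T v)
      = ∑ j ∈ range m, ‖(T ^ (j + 1)) v‖ / c ^ j + ‖(T ^ (m + 1)) v‖ / c ^ m := by
        simp only [adaptedNorm, hshift, sum_range_succ]
    _ ≤ ∑ j ∈ range m, ‖(T ^ (j + 1)) v‖ / c ^ j + c * ‖v‖ := by
        gcongr
        rw [div_le_iff₀ (by positivity)]
        exact hv.trans_eq (by ring)
    _ = c * T.adaptedNorm c (m + 1) v := by
        rw [adaptedNorm, sum_range_succ', mul_add, mul_sum]
        congr 1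
        · refine sum_congr rfl fun j _ => ?_
          field_simp
          ring
        · simp

end Module.End

namespace spectrum

variable {A : Type*} [NormedRing A] [NormedAlgebra ℂ A] [CompleteSpace A]

theorem exists_norm_pow_le_of_spectralRadius_lt_one {a : A} (ha : spectralRadius ℂ a < 1) :
    ∃ c : ℝ, 0 < c ∧ c < 1 ∧ ∃ k : ℕ, 0 < k ∧ ‖a ^ k‖ ≤ c ^ k := by
  obtain ⟨c, hac, hc1⟩ := exists_between ha
  lift c to ℝ≥0 using hc1.ne_top
  obtain ⟨k, hk_lt, hk⟩ := ((pow_nnnorm_pow_one_div_tendsto_nhds_spectralRadius a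
    |>.eventually_lt_const hac).and (eventually_gt_atTop 0)).exists
  rw [one_div, ENNReal.rpow_inv_lt_iff (by positivity), ENNReal.rpow_natCast] at hk_lt
  refine ⟨c, ?_, by exact_mod_cast hc1, k, hk, ?_⟩
  · exact_mod_cast zero_le.trans_lt hac
  · exact_mod_cast hk_lt.le

theorem spectralRadius_inv_lt_one (u : Aˣ) (hu : ∀ z ∈ spectrum ℂ (u : A), 1 < ‖z‖) :
    spectralRadius ℂ (↑u⁻¹ : A) < 1 := by
  rcases (spectrum ℂ (↑u⁻¹ : A)).eq_empty_or_nonempty with h | h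
  · simp [spectralRadius, h]
  refine spectralRadius_lt_of_forall_lt_of_nonempty h fun z hz => ?_
  have := hu z⁻¹ (inv₀_mem_iff.mpr hz)
  rw [norm_inv, one_lt_inv_iff₀] at this
  exact_mod_cast this.2

end spectrum

namespace Matrix

attribute [local instance] Matrix.linftyOpNormedRing Matrix.linftyOpNormedAlgebra

variable {m : Type*} [Fintype m] [DecidableEq m]

theorem exists_norm_inv_pow_mulVec_le (u : (Matrix m m ℂ)ˣ)
    (hu : ∀ z ∈ spectrum ℂ (u : Matrix m m ℂ), 1 < ‖z‖) :
    ∃ c : ℝ, 0 < c ∧ c < 1 ∧ ∃ k : ℕ, 0 < k ∧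
      ∀ v, ‖((↑u⁻¹ : Matrix m m ℂ) ^ k) *ᵥ v‖ ≤ c ^ k * ‖v‖ := by
  obtain ⟨c, hc₀, hc₁, k, hk, hck⟩ :=
    spectrum.exists_norm_pow_le_of_spectralRadius_lt_one (spectrum.spectralRadius_inv_lt_one u hu)
  exact ⟨c, hc₀, hc₁, k, hk, fun v => (linfty_opNorm_mulVec _ v).trans (by gcongr)⟩

theorem compLeft_eq_inv_mulVec_of_add_eq {R S : Type*} [CommRing R] [CommRing S] (f : R →+* S)
    {M : Matrix m m R} {u : (Matrix m m S)ˣ} (hu : ↑u = M.map f) {a b x y : m → R}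
    (h : a + x = y + M *ᵥ b) :
    f.compLeft m b = ↑u⁻¹ *ᵥ (f.compLeft m a + (f.compLeft m x - f.compLeft m y)) := by
  have hmul : f.compLeft m (M *ᵥ b) = ↑u *ᵥ f.compLeft m b :=
    hu ▸ funext (RingHom.map_mulVec f M b)
  have hcast : f.compLeft m a + f.compLeft m x = f.compLeft m y + ↑u *ᵥ f.compLeft m b := by
    rw [← map_add, ← hmul, ← map_add, h]
  calc f.compLeft m b = (↑u⁻¹ : Matrix m m S) *ᵥ (↑u *ᵥ f.compLeft m b) := by
        rw [mulVec_mulVec, Units.inv_mul, one_mulVec]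
    _ = ↑u⁻¹ *ᵥ (f.compLeft m a + (f.compLeft m x - f.compLeft m y)) := by
        congr 1; linear_combination -hcast

end Matrix

theorem Pi.norm_intCast_comp {ι : Type*} [Fintype ι] (v : ι → ℤ) :
    ‖(Int.cast ∘ v : ι → ℂ)‖ = ‖v‖ := by
  simp [Pi.norm_def, Function.comp_def]

/-- in the graph `Γ(A,K)` on `ℤⁿ` with an edge `u → v` whenever
`u + x = y + Av` for some `x, y ∈ K`, the nucleus (vertices lying on a directed
cycle or reachable from a cycle) is finite. -/
theorem stmt17 {n : ℕ} (A : Matrix (Fin n) (Fin n) ℤ) (hA : IsExpanding A)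
    (K : Finset (Fin n → ℤ)) :
    Set.Finite {v : Fin n → ℤ |
      ∃ u : Fin n → ℤ,
        Relation.TransGen (fun a b => ∃ x ∈ K, ∃ y ∈ K, a + x = y + A.mulVec b) u u ∧
        Relation.ReflTransGen (fun a b => ∃ x ∈ K, ∃ y ∈ K, a + x = y + A.mulVec b) u v} := by
  set Aℂ : Matrix (Fin n) (Fin n) ℂ := A.map Int.cast
  have hspec : ∀ z ∈ spectrum ℂ Aℂ, 1 < ‖z‖ := fun z hz =>
    hA z (Matrix.mem_spectrum_iff_isRoot_charpoly.mp hz)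
  obtain ⟨u, hu⟩ : IsUnit Aℂ :=
    (spectrum.zero_notMem_iff ℂ).mp fun h => absurd (hspec 0 h) (by simp)
  obtain ⟨c, hc₀, hc₁, k, hk, hck⟩ := Matrix.exists_norm_inv_pow_mulVec_le u (hu ▸ hspec)
  set T : Module.End ℂ (Fin n → ℂ) := Matrix.toLin' (↑u⁻¹ : Matrix (Fin n) (Fin n) ℂ)
  set ι := (Int.castRingHom ℂ).compLeft (Fin n)
  have hT : ∀ v, ‖(T ^ k) v‖ ≤ c ^ k * ‖v‖ := by simpa [T, ← Matrix.toLin'_pow] using hck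
  obtain ⟨R, hR⟩ : ∃ R, ∀ x ∈ K, ∀ y ∈ K, T.adaptedNorm c k (T (ι x - ι y)) ≤ (1 - c) * R := by
    obtain ⟨D, hD⟩ := ((K ×ˢ K).finite_toSet.image
      fun p => T.adaptedNorm c k (T (ι p.1 - ι p.2))).bddAbove
    refine ⟨D / (1 - c), fun x hx y hy => ?_⟩
    rw [mul_div_cancel₀ _ (sub_pos.mpr hc₁).ne']
    exact hD ⟨(x, y), by simp [hx, hy], rfl⟩
  have hstep : ∀ a b, (∃ x ∈ K, ∃ y ∈ K, a + x = y + A.mulVec b) →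
      T.adaptedNorm c k (ι b) - R ≤ c * (T.adaptedNorm c k (ι a) - R) := by
    rintro a b ⟨x, hx, y, hy, hab⟩
    have hb : ι b = T (ι a) + T (ι x - ι y) :=
      (Matrix.compLeft_eq_inv_mulVec_of_add_eq _ hu hab).trans (by rw [mulVec_add]; rfl)
    rw [hb]
    linarith [T.adaptedNorm_add_le (k := k) hc₀.le (T (ι a)) (T (ι x - ι y)),
      T.adaptedNorm_apply_le hc₀ hk (hT (ι a)), hR x hx y hy]
  refine ((isCompact_closedBall (0 : Fin n → ℤ) R).finite DiscreteTopology.isDiscrete).subset ?_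
  rintro v ⟨w, hcycle, hpath⟩
  have hv := hpath.le_of_contracting hc₀.le hstep
    (hcycle.le_of_cycle_of_contracting hc₀.le hc₁ hstep)
  rw [mem_closedBall_zero_iff, ← Pi.norm_intCast_comp]
  exact (T.norm_le_adaptedNorm hc₀.le hk _).trans hv
end

section
/- Let A be an expanding integer n×n matrix and D a complete set of coset representatives of ℤⁿ/A(ℤⁿ). If the translates {T + z : z ∈ ℤⁿ} of T = T(A,D) have pairwise null intersections (λ((T+z) ∩ (T+z')) = 0 for z ≠ z'), then λ(T) = 1. -/
open MeasureTheory

/-!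
By Gelfand's formula the powers of `A⁻¹` are summable in operator norm, so `T` is a compact
set with `A⁻¹ (D + T) ⊆ T`. Since `D` represents `ℤⁿ / Aℤⁿ`, the closed set `T + ℤⁿ` is mapped
into itself by `A⁻¹`; it contains a translate `t + ℤⁿ`, and the images of these translates under
the contractions `A⁻ᵐ` become dense. Hence `T + ℤⁿ = ℝⁿ`, and together with the null overlaps `T` is
a fundamental domain of `ℤⁿ`, so it has the volume of the unit cube.
-/

open Filter Topology Matrix Pointwise Submodule

attribute [local instance] Matrix.linftyOpNormedAddCommGroup Matrix.linftyOpNormedRing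
  Matrix.linftyOpNormedAlgebra

theorem summable_norm_pow_of_forall_norm_lt_one {𝔸 : Type*} [NormedRing 𝔸] [NormedAlgebra ℂ 𝔸]
    [CompleteSpace 𝔸] {a : 𝔸} (ha : ∀ z ∈ spectrum ℂ a, ‖z‖ < 1) :
    Summable fun k => ‖a ^ k‖ := by
  have hρ : spectralRadius ℂ a < 1 := by
    rcases (spectrum ℂ a).eq_empty_or_nonempty with h | h
    · simp [spectralRadius, h]
    · simpa using spectrum.spectralRadius_lt_of_forall_lt_of_nonempty h
        (r := 1) fun z hz => by simpa [← NNReal.coe_lt_coe] using ha z hz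
  obtain ⟨r, hρr, hr1⟩ := ENNReal.lt_iff_exists_nnreal_btwn.mp hρ
  have hroot : ∀ᶠ k : ℕ in atTop, ‖a ^ k‖ ^ (1 / k : ℝ) < r := by
    have hgelfand := spectrum.pow_norm_pow_one_div_tendsto_nhds_spectralRadius a
    filter_upwards [hgelfand.eventually_lt_const hρr] with k hk
    exact (ENNReal.ofReal_lt_coe_iff (by positivity)).mp hk
  refine Summable.of_norm_bounded_eventually_nat
    (summable_geometric_of_lt_one r.2 (by exact_mod_cast hr1)) ?_
  filter_upwards [hroot, eventually_ge_atTop 1] with k hk hk1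
  rw [norm_norm, ← Real.rpow_inv_natCast_pow (norm_nonneg (a ^ k)) (by omega : k ≠ 0), ← one_div]
  exact pow_le_pow_left₀ (by positivity) hk.le k

theorem Matrix.map_inv {ι K L : Type*} [Fintype ι] [DecidableEq ι] [Field K] [Field L]
    (f : K →+* L) (M : Matrix ι ι K) : M⁻¹.map f = (M.map f)⁻¹ := by
  rw [Matrix.inv_def, Matrix.inv_def, Matrix.map_smul' _ _ _ (map_mul f),
    ← RingHom.mapMatrix_apply, RingHom.map_adjugate, Ring.inverse_eq_inv', Ring.inverse_eq_inv',
    map_inv₀, RingHom.map_det]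
  rfl

theorem IsExpanding.det_ne_zero {n : ℕ} {A : Matrix (Fin n) (Fin n) ℤ} (hA : IsExpanding A) :
    A.det ≠ 0 := by
  intro h
  have h0 : (0 : ℂ) ∈ spectrum ℂ (A.map (Int.cast : ℤ → ℂ)) := by
    rw [spectrum.zero_mem_iff, Matrix.isUnit_iff_isUnit_det, ← Int.cast_det, h, Int.cast_zero]
    exact not_isUnit_zero
  exact absurd (hA 0 (Matrix.mem_spectrum_iff_isRoot_charpoly.mp h0)) (by simp)

theorem IsExpanding.isUnit_map {n : ℕ} {A : Matrix (Fin n) (Fin n) ℤ} (hA : IsExpanding A)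
    (K : Type*) [Field K] [CharZero K] : IsUnit (A.map (Int.cast : ℤ → K)) := by
  rw [Matrix.isUnit_iff_isUnit_det, isUnit_iff_ne_zero, ← Int.cast_det]
  exact_mod_cast hA.det_ne_zero

theorem IsExpanding.norm_lt_one_of_mem_spectrum_inv {n : ℕ} {A : Matrix (Fin n) (Fin n) ℤ}
    (hA : IsExpanding A) {z : ℂ} (hz : z ∈ spectrum ℂ (A.map (Int.cast : ℤ → ℂ))⁻¹) : ‖z‖ < 1 := by
  rw [← (hA.isUnit_map ℂ).unit_spec, ← Matrix.coe_units_inv, ← spectrum.map_inv, Set.mem_inv,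
    Matrix.mem_spectrum_iff_isRoot_charpoly] at hz
  exact (one_lt_inv_iff₀.mp (norm_inv z ▸ hA _ hz)).2

theorem IsExpanding.summable_norm_inv_pow_s19 {n : ℕ} {A : Matrix (Fin n) (Fin n) ℤ}
    (hA : IsExpanding A) : Summable fun k => ‖(A.map (Int.cast : ℤ → ℝ))⁻¹ ^ k‖ := by
  have : CompleteSpace (Matrix (Fin n) (Fin n) ℂ) := FiniteDimensional.complete ℂ _
  have hmap :
      (A.map (Int.cast : ℤ → ℝ))⁻¹.map Complex.ofRealHom = (A.map (Int.cast : ℤ → ℂ))⁻¹ := by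
    rw [Matrix.map_inv, Matrix.map_map]; congr 2
  have hnorm : ∀ M : Matrix (Fin n) (Fin n) ℝ, ‖M.map Complex.ofRealHom‖ = ‖M‖ := fun M => by
    simp [Matrix.linfty_opNorm_def]
  have := summable_norm_pow_of_forall_norm_lt_one (𝔸 := Matrix (Fin n) (Fin n) ℂ)
    fun z hz => hA.norm_lt_one_of_mem_spectrum_inv hz
  simpa [← hmap, ← Matrix.map_pow, hnorm] using this

section Attractor

variable {ι : Type*} [Fintype ι] [DecidableEq ι] (B : Matrix ι ι ℝ) (D : Finset (ι → ℤ))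

def attractor : Set (ι → ℝ) :=
  {x | ∃ d : ℕ → ι → ℤ, (∀ k, d k ∈ D) ∧ HasSum (fun k => (B ^ (k + 1)) *ᵥ (Int.cast ∘ d k)) x}

noncomputable def digitSum (d : ℕ → ι → ℤ) : ι → ℝ :=
  ∑' k, (B ^ (k + 1)) *ᵥ (Int.cast ∘ d k)

variable {B D}

theorem norm_mulVec_intCast_le (M : Matrix ι ι ℝ) {v : ι → ℤ} (hv : v ∈ D) :
    ‖M *ᵥ (Int.cast ∘ v)‖ ≤ ‖M‖ * ∑ w ∈ D, ‖(Int.cast ∘ w : ι → ℝ)‖ :=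
  (Matrix.linfty_opNorm_mulVec _ _).trans <| mul_le_mul_of_nonneg_left
    (Finset.single_le_sum (f := fun w : ι → ℤ => ‖(Int.cast ∘ w : ι → ℝ)‖)
      (fun _ _ => norm_nonneg _) hv) (norm_nonneg _)

theorem hasSum_digitSum (hB : Summable fun k => ‖B ^ k‖) {d : ℕ → ι → ℤ} (hd : ∀ k, d k ∈ D) :
    HasSum (fun k => (B ^ (k + 1)) *ᵥ (Int.cast ∘ d k)) (digitSum B d) :=
  (Summable.of_norm_bounded (((summable_nat_add_iff 1).mpr hB).mul_right _)
    fun k => norm_mulVec_intCast_le _ (hd k)).hasSum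

theorem attractor_eq_image (hB : Summable fun k => ‖B ^ k‖) :
    attractor B D = digitSum B '' Set.pi Set.univ fun _ => (D : Set (ι → ℤ)) := by
  ext x
  constructor
  · rintro ⟨d, hd, hx⟩
    exact ⟨d, fun k _ => hd k, hx.tsum_eq⟩
  · rintro ⟨d, hd, rfl⟩
    exact ⟨d, fun k => hd k trivial, hasSum_digitSum hB fun k => hd k trivial⟩

theorem isCompact_attractor (hB : Summable fun k => ‖B ^ k‖) : IsCompact (attractor B D) := by
  rw [attractor_eq_image hB]
  refine (isCompact_univ_pi fun _ => D.finite_toSet.isCompact).image_of_continuousOn ?_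
  refine continuousOn_tsum (fun k => Continuous.continuousOn ?_)
    (((summable_nat_add_iff 1).mpr hB).mul_right _)
    fun k d hd => norm_mulVec_intCast_le _ (hd k trivial)
  fun_prop

theorem attractor_nonempty (hB : Summable fun k => ‖B ^ k‖) (hD : D.Nonempty) :
    (attractor B D).Nonempty := by
  obtain ⟨v, hv⟩ := hD
  exact ⟨_, fun _ => v, fun _ => hv, hasSum_digitSum hB fun _ => hv⟩

theorem mulVec_add_mem_attractor {v : ι → ℤ} (hv : v ∈ D) {t : ι → ℝ} (ht : t ∈ attractor B D) :
    B *ᵥ (Int.cast ∘ v + t) ∈ attractor B D := by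
  obtain ⟨d, hd, hsum⟩ := ht
  have htail : HasSum (fun k => (B ^ (k + 1 + 1)) *ᵥ (Int.cast ∘ d k)) (B *ᵥ t) := by
    simpa only [pow_succ', ← Matrix.mulVec_mulVec, Function.comp_def, Matrix.mulVecLin_apply]
      using hsum.map (Matrix.mulVecLin B) (Matrix.mulVecLin B).continuous_of_finiteDimensional
  let e : ℕ → ι → ℤ := fun k => Nat.casesOn k v d
  refine ⟨e, fun k => Nat.casesOn k hv hd, ?_⟩
  rw [Matrix.mulVec_add]
  simpa [e] using htail.zero_add (f := fun k => (B ^ (k + 1)) *ᵥ (Int.cast ∘ e k))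

end Attractor

abbrev intLattice (ι : Type*) [Finite ι] : Submodule ℤ (ι → ℝ) :=
  span ℤ (Set.range (Pi.basisFun ℝ ι))

variable {ι : Type*} [Fintype ι]

theorem mem_intLattice_iff {v : ι → ℝ} : v ∈ intLattice ι ↔ ∃ z : ι → ℤ, Int.cast ∘ z = v := by
  rw [Module.Basis.mem_span_iff_repr_mem]
  simp only [Pi.basisFun_repr, Set.mem_range, algebraMap_int_eq, Int.coe_castRingHom]
  exact ⟨fun h => ⟨fun i => (h i).choose, funext fun i => (h i).choose_spec⟩,
    fun ⟨z, hz⟩ i => ⟨z i, congrFun hz i⟩⟩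

theorem intCast_mem_intLattice (z : ι → ℤ) : (Int.cast ∘ z : ι → ℝ) ∈ intLattice ι :=
  mem_intLattice_iff.mpr ⟨z, rfl⟩

theorem isAddFundamentalDomain_of_add_intLattice_eq_univ {T : Set (ι → ℝ)}
    (hT : NullMeasurableSet T) (hcover : T + (intLattice ι : Set (ι → ℝ)) = Set.univ)
    (hnull : ∀ z z' : ι → ℤ, z ≠ z' →
      volume ((· + Int.cast ∘ z) '' T ∩ (· + Int.cast ∘ z') '' T) = 0) :
    IsAddFundamentalDomain (intLattice ι).toAddSubgroup T := by
  refine ⟨hT, Eventually.of_forall fun x => ?_, ?_⟩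
  · obtain ⟨t, ht, ℓ, hℓ, rfl⟩ := hcover.symm ▸ Set.mem_univ x
    exact ⟨-⟨ℓ, hℓ⟩, by simpa [AddSubgroup.vadd_def] using ht⟩
  · rintro ⟨ℓ, hℓ⟩ ⟨ℓ', hℓ'⟩ hne
    obtain ⟨z, rfl⟩ := mem_intLattice_iff.mp hℓ
    obtain ⟨z', rfl⟩ := mem_intLattice_iff.mp hℓ'
    have hvadd : ∀ v : ι → ℝ, (v +ᵥ ·) '' T = (· + v) '' T := fun v =>
      Set.image_congr fun x _ => add_comm v x
    change volume (((Int.cast ∘ z : ι → ℝ) +ᵥ ·) '' T ∩ ((Int.cast ∘ z' : ι → ℝ) +ᵥ ·) '' T) = 0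
    rw [hvadd, hvadd]
    exact hnull z z' fun h => hne (by simp [h])

theorem MeasureTheory.IsAddFundamentalDomain.volume_eq_one {T : Set (ι → ℝ)}
    (hT : IsAddFundamentalDomain (intLattice ι).toAddSubgroup T) : volume T = 1 := by
  classical
  have : Countable (intLattice ι).toAddSubgroup := inferInstanceAs (Countable (intLattice ι))
  rw [hT.measure_eq (ZSpan.isAddFundamentalDomain' (Pi.basisFun ℝ ι) volume),
    ZSpan.fundamentalDomain_pi_basisFun, volume_pi_pi]
  simp

variable [DecidableEq ι]

theorem eq_univ_of_isClosed_of_inv_mulVec_mem {S : Set (ι → ℝ)} (hS : IsClosed S)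
    {M : Matrix ι ι ℝ} (hM : IsUnit M) (hcontract : Tendsto (fun m => ‖M⁻¹ ^ m‖) atTop (𝓝 0))
    (hinv : ∀ x ∈ S, M⁻¹ *ᵥ x ∈ S) {t : ι → ℝ} (ht : ∀ ℓ ∈ intLattice ι, t + ℓ ∈ S) :
    S = Set.univ := by
  have hpow : ∀ m, ∀ x ∈ S, M⁻¹ ^ m *ᵥ x ∈ S := by
    intro m
    induction m with
    | zero => simp
    | succ m ih =>
      intro x hx
      rw [pow_succ', ← Matrix.mulVec_mulVec]
      exact hinv _ (ih x hx)
  refine Set.eq_univ_of_forall fun x => hS.closure_eq ▸ Metric.mem_closure_iff.mpr fun ε hε => ?_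
  set b := Pi.basisFun ℝ ι
  set C := ‖t‖ + ∑ i, ‖b i‖
  obtain ⟨m, hm⟩ := ((hcontract.mul_const C).eventually_lt_const (by simpa using hε)).exists
  set y := M ^ m *ᵥ x
  refine ⟨M⁻¹ ^ m *ᵥ (t + ZSpan.floor b y), hpow m _ (ht _ (ZSpan.floor b y).2), ?_⟩
  have hx : x = M⁻¹ ^ m *ᵥ y := by
    rw [Matrix.mulVec_mulVec, Matrix.inv_pow', Matrix.nonsing_inv_mul _
      ((Matrix.isUnit_iff_isUnit_det _).mp (hM.pow m)), Matrix.one_mulVec]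
  calc dist x (M⁻¹ ^ m *ᵥ (t + ZSpan.floor b y))
      = ‖M⁻¹ ^ m *ᵥ (ZSpan.fract b y - t)‖ := by
        rw [dist_eq_norm, hx, ← Matrix.mulVec_sub, ZSpan.fract_apply]
        congr 2
        abel
    _ ≤ ‖M⁻¹ ^ m‖ * C := (Matrix.linfty_opNorm_mulVec _ _).trans <| by
        gcongr
        linarith [norm_sub_le (ZSpan.fract b y) t, ZSpan.norm_fract_le b y]
    _ < ε := hm

theorem inv_mulVec_mem_attractor_add_intLattice {A : Matrix ι ι ℤ} {D : Finset (ι → ℤ)}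
    (hD : ∀ z, ∃ d ∈ D, ∃ w, z = d + A *ᵥ w) (hA : IsUnit (A.map (Int.cast : ℤ → ℝ)))
    {x : ι → ℝ} (hx : x ∈ attractor (A.map (Int.cast : ℤ → ℝ))⁻¹ D + (intLattice ι : Set _)) :
    (A.map (Int.cast : ℤ → ℝ))⁻¹ *ᵥ x ∈
      attractor (A.map (Int.cast : ℤ → ℝ))⁻¹ D + (intLattice ι : Set _) := by
  obtain ⟨t, ht, ℓ, hℓ, rfl⟩ := hx
  obtain ⟨z, rfl⟩ := mem_intLattice_iff.mp hℓ
  obtain ⟨d, hd, w, rfl⟩ := hD z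
  refine ⟨_, mulVec_add_mem_attractor hd ht, _, intCast_mem_intLattice w, ?_⟩
  have hcast :
      (Int.cast ∘ (d + A *ᵥ w) : ι → ℝ) = Int.cast ∘ d + A.map Int.cast *ᵥ (Int.cast ∘ w) := by
    ext i
    simpa using (Int.castRingHom ℝ).map_mulVec A w i
  dsimp only
  rw [hcast, add_left_comm, ← add_assoc, Matrix.mulVec_add _ (Int.cast ∘ d + t),
    Matrix.mulVec_mulVec, Matrix.nonsing_inv_mul _ ((Matrix.isUnit_iff_isUnit_det _).mp hA),
    Matrix.one_mulVec]

theorem IsExpanding.attractor_add_intLattice_eq_univ {n : ℕ} {A : Matrix (Fin n) (Fin n) ℤ}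
    (hA : IsExpanding A) {D : Finset (Fin n → ℤ)} (hD : ∀ z, ∃ d ∈ D, ∃ w, z = d + A *ᵥ w) :
    attractor (A.map (Int.cast : ℤ → ℝ))⁻¹ D + (intLattice (Fin n) : Set _) = Set.univ := by
  have hB := hA.summable_norm_inv_pow_s19
  obtain ⟨d, hd, -⟩ := hD 0
  obtain ⟨t, ht⟩ := attractor_nonempty hB ⟨d, hd⟩
  exact eq_univ_of_isClosed_of_inv_mulVec_mem
    ((intLattice _).toAddSubgroup.isClosed_of_discrete.add_left_of_isCompact
      (isCompact_attractor hB))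
    (hA.isUnit_map ℝ) hB.tendsto_atTop_zero
    (fun _ hx => inv_mulVec_mem_attractor_add_intLattice hD (hA.isUnit_map ℝ) hx)
    fun _ hℓ => Set.add_mem_add ht hℓ

/-- if `D` is a coset transversal and the integer translates of
`T = T(A,D)` have pairwise null intersections, then `λ(T) = 1`. -/
theorem stmt19 {n : ℕ} (A : Matrix (Fin n) (Fin n) ℤ) (hA : IsExpanding A)
    (D : Finset (Fin n → ℤ))
    (hD : ∀ z : Fin n → ℤ, ∃! d : Fin n → ℤ, d ∈ D ∧ ∃ w : Fin n → ℤ, z = d + A.mulVec w)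
    (T : Set (Fin n → ℝ))
    (hT : T = {x : Fin n → ℝ | ∃ d : ℕ → (Fin n → ℤ), (∀ k, d k ∈ D) ∧
      HasSum (fun k => ((A.map (Int.cast : ℤ → ℝ))⁻¹ ^ (k + 1)).mulVec
        (fun i => (d k i : ℝ))) x})
    (hnull : ∀ z z' : Fin n → ℤ, z ≠ z' →
      volume (((fun x => x + fun i => (z i : ℝ)) '' T) ∩
        ((fun x => x + fun i => (z' i : ℝ)) '' T)) = 0) :
    volume T = 1 := by
  have hT' : T = attractor (A.map (Int.cast : ℤ → ℝ))⁻¹ D := hT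
  have hcompact : IsCompact T := hT' ▸ isCompact_attractor hA.summable_norm_inv_pow_s19
  have hcover : T + (intLattice (Fin n) : Set _) = Set.univ :=
    hT' ▸ hA.attractor_add_intLattice_eq_univ fun z => (hD z).exists
  exact (isAddFundamentalDomain_of_add_intLattice_eq_univ
    hcompact.measurableSet.nullMeasurableSet hcover hnull).volume_eq_one
end
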